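/- arXiv:2005.05820 — 7 statements merged into one kernel-verified Lean document; each statement's English description precedes it below -/
import Mathlib

section
/- Let r > 0 and β ∈ ℝ with cos β < 1. For r′ > 0 set ρ(r′) = √(r² + r′² − 2 r r′ cos β) and t(r′) = (r′ + ρ(r′))/r. Then t is a continuously differentiable, strictly increasing bijection from (0, ∞) onto (1, ∞), and for every r′ > 0, writing t = t(r′), one has the identities ρ(r′) = r·f_β(t) and r′ = r·(t² − 1)/(2(t − cos β)), and the inverse map t ↦ r′ has derivative dr′/dt = r·f_β(t)/(t − cos β), which is strictly positive. -/
/-!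
Write `c = cos β`, `t = rayParam r c` and `g = radiusOfParam r c`, so
`g(s) = r(s² − 1)/(2(s − c))`. Since `r·t(r′) = r′ + ρ(r′)`, squaring `ρ = r·t − r′` in the
law of cosines `ρ² = r² + r′² − 2rr′c` gives `r(t² − 1) = 2r′(t − c)`, i.e. `r′ = g(t(r′))`,
and then `ρ = r·t − g(t) = r·f_β(t)`. Conversely `t(g(s)) = s` for `s > 1`, because the
radicand at `r′ = g(s)` is the perfect square `(r·f_β(s))²`. So `t` and `g` are mutually
inverse between `(0, ∞)` and `(1, ∞)`, and `t` is strictly increasing because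
`g′ = r·f_β/(s − c) > 0`.
-/

/-- `fbeta β t = (t² − 2t·cos β + 1)/(2(t − cos β))`, the function `f_β` from the paper. -/
noncomputable def fbeta (β t : ℝ) : ℝ :=
  (t ^ 2 - 2 * t * Real.cos β + 1) / (2 * (t - Real.cos β))

open Real Set

noncomputable def rayParam (r c x : ℝ) : ℝ := (x + √(r ^ 2 + x ^ 2 - 2 * r * x * c)) / r

noncomputable def radiusOfParam (r c s : ℝ) : ℝ := r * (s ^ 2 - 1) / (2 * (s - c))

section

variable {r c : ℝ}

lemma rayParam_radicand_pos (hr : 0 < r) (hc : c < 1) {x : ℝ} (hx : 0 < x) :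
    0 < r ^ 2 + x ^ 2 - 2 * r * x * c := by
  nlinarith [sq_nonneg (r - x), mul_pos (mul_pos hr hx) (sub_pos.2 hc)]

lemma contDiffOn_rayParam (hr : 0 < r) (hc : c < 1) {n : WithTop ℕ∞} :
    ContDiffOn ℝ n (rayParam r c) (Ioi 0) := by
  have hsqrt : ContDiffOn ℝ n (fun x => √(r ^ 2 + x ^ 2 - 2 * r * x * c)) (Ioi 0) :=
    ContDiffOn.sqrt (by fun_prop) fun x hx => (rayParam_radicand_pos hr hc hx).ne'
  exact (contDiffOn_id.add hsqrt).div_const r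

lemma one_lt_rayParam (hr : 0 < r) (hc : c < 1) {x : ℝ} (hx : 0 < x) :
    1 < rayParam r c x := by
  rw [rayParam, one_lt_div hr, ← sub_lt_iff_lt_add']
  rcases lt_or_ge (r - x) 0 with hneg | hnonneg
  · exact hneg.trans_le (sqrt_nonneg _)
  · rw [lt_sqrt hnonneg]
    nlinarith [mul_pos (mul_pos hr hx) (sub_pos.2 hc)]

lemma radiusOfParam_pos (hr : 0 < r) (hc : c < 1) {s : ℝ} (hs : 1 < s) :
    0 < radiusOfParam r c s :=
  div_pos (mul_pos hr (by nlinarith)) (by linarith)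

lemma radiusOfParam_rayParam (hr : 0 < r) (hc : c < 1) {x : ℝ} (hx : 0 < x) :
    radiusOfParam r c (rayParam r c x) = x := by
  set ρ := √(r ^ 2 + x ^ 2 - 2 * r * x * c)
  have hρ : ρ ^ 2 = r ^ 2 + x ^ 2 - 2 * r * x * c := sq_sqrt (rayParam_radicand_pos hr hc hx).le
  have htc : rayParam r c x - c ≠ 0 := by linarith [one_lt_rayParam hr hc hx]
  have hrt : r * rayParam r c x = x + ρ := by rw [rayParam, mul_div_cancel₀ _ hr.ne']
  have key : r * (rayParam r c x ^ 2 - 1) = 2 * x * (rayParam r c x - c) := by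
    apply mul_left_cancel₀ hr.ne'
    linear_combination (r * rayParam r c x + ρ - x) * hrt + hρ
  rw [radiusOfParam, key]
  field_simp

lemma rayParam_radiusOfParam (hr : 0 < r) (hc : c < 1) {s : ℝ} (hs : 1 < s) :
    rayParam r c (radiusOfParam r c s) = s := by
  have hsc : s - c ≠ 0 := by linarith
  have hradicand : r ^ 2 + radiusOfParam r c s ^ 2 - 2 * r * radiusOfParam r c s * c
      = (r * (s ^ 2 - 2 * s * c + 1) / (2 * (s - c))) ^ 2 := by
    rw [radiusOfParam]
    field_simp
    ring
  have hpos : 0 ≤ r * (s ^ 2 - 2 * s * c + 1) / (2 * (s - c)) :=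
    div_nonneg (mul_nonneg hr.le (by nlinarith)) (by linarith)
  rw [rayParam, hradicand, sqrt_sq hpos, radiusOfParam]
  field_simp
  ring

lemma invOn_radiusOfParam_rayParam (hr : 0 < r) (hc : c < 1) :
    InvOn (radiusOfParam r c) (rayParam r c) (Ioi 0) (Ioi 1) :=
  ⟨fun _ hx => radiusOfParam_rayParam hr hc hx, fun _ hs => rayParam_radiusOfParam hr hc hs⟩

end

section

variable {r β : ℝ}

lemma fbeta_pos {s : ℝ} (hs : cos β < s) : 0 < fbeta β s := by
  have hsc : 0 < s - cos β := sub_pos.2 hs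
  refine div_pos ?_ (by linarith)
  nlinarith [neg_one_le_cos β, cos_le_one β, mul_pos hsc hsc]

lemma hasDerivAt_radiusOfParam {s : ℝ} (hs : s ≠ cos β) :
    HasDerivAt (radiusOfParam r (cos β)) (r * fbeta β s / (s - cos β)) s := by
  have hsc : s - cos β ≠ 0 := sub_ne_zero.2 hs
  have hnum : HasDerivAt (fun s => r * (s ^ 2 - 1)) (r * (2 * s)) s := by
    simpa using ((hasDerivAt_pow 2 s).sub_const 1).const_mul r
  have hden : HasDerivAt (fun s => 2 * (s - cos β)) 2 s := by
    simpa using ((hasDerivAt_id s).sub_const (cos β)).const_mul 2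
  refine (hnum.div hden (mul_ne_zero two_ne_zero hsc)).congr_deriv ?_
  rw [fbeta]
  field_simp
  ring

lemma strictMonoOn_radiusOfParam (hr : 0 < r) :
    StrictMonoOn (radiusOfParam r (cos β)) (Ioi (cos β)) := by
  have hderiv : ∀ s ∈ Ioi (cos β), HasDerivAt (radiusOfParam r (cos β))
      (r * fbeta β s / (s - cos β)) s := fun s hs => hasDerivAt_radiusOfParam (ne_of_gt hs)
  refine strictMonoOn_of_hasDerivWithinAt_pos (f' := fun s => r * fbeta β s / (s - cos β))
    (convex_Ioi _)
    (fun s hs => (hderiv s hs).continuousAt.continuousWithinAt) ?_ ?_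
  all_goals rw [interior_Ioi]
  · exact fun s hs => (hderiv s hs).hasDerivWithinAt
  · exact fun s hs => div_pos (mul_pos hr (fbeta_pos hs)) (sub_pos.2 hs)

lemma strictMonoOn_rayParam (hr : 0 < r) (hβ : cos β < 1) :
    StrictMonoOn (rayParam r (cos β)) (Ioi 0) := by
  intro a ha b hb hab
  have hmem : ∀ x ∈ Ioi (0 : ℝ), rayParam r (cos β) x ∈ Ioi (cos β) :=
    fun x hx => hβ.trans (one_lt_rayParam hr hβ hx)
  rwa [← (strictMonoOn_radiusOfParam hr).lt_iff_lt (hmem a ha) (hmem b hb),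
    radiusOfParam_rayParam hr hβ ha, radiusOfParam_rayParam hr hβ hb]

lemma sqrt_eq_mul_fbeta_rayParam (hr : 0 < r) (hβ : cos β < 1) {x : ℝ} (hx : 0 < x) :
    √(r ^ 2 + x ^ 2 - 2 * r * x * cos β) = r * fbeta β (rayParam r (cos β) x) := by
  have hρ : √(r ^ 2 + x ^ 2 - 2 * r * x * cos β) = r * rayParam r (cos β) x - x := by
    rw [rayParam, mul_div_cancel₀ _ hr.ne']
    ring
  have htc : rayParam r (cos β) x - cos β ≠ 0 := by linarith [one_lt_rayParam hr hβ hx]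
  have hx' := radiusOfParam_rayParam hr hβ hx
  set t := rayParam r (cos β) x
  rw [hρ, ← hx', radiusOfParam, fbeta]
  field_simp
  ring

end

/-- the change of variables `t(r′) = (r′ + ρ(r′))/r` with
`ρ(r′) = √(r² + r′² − 2 r r′ cos β)` is a `C¹`, strictly increasing bijection from
`(0,∞)` onto `(1,∞)`, with `ρ(r′) = r·f_β(t(r′))`,
`r′ = r(t² − 1)/(2(t − cos β))`, and the inverse map `t ↦ r′` has strictly positive
derivative `r·f_β(t)/(t − cos β)`. -/
theorem stmt0 (r β : ℝ) (hr : 0 < r) (hβ : Real.cos β < 1)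
    (ρ t : ℝ → ℝ)
    (hρ : ∀ r', ρ r' = Real.sqrt (r ^ 2 + r' ^ 2 - 2 * r * r' * Real.cos β))
    (ht : ∀ r', t r' = (r' + ρ r') / r) :
    ContDiffOn ℝ 1 t (Set.Ioi 0) ∧
    StrictMonoOn t (Set.Ioi 0) ∧
    Set.BijOn t (Set.Ioi 0) (Set.Ioi 1) ∧
    (∀ r' > 0, ρ r' = r * fbeta β (t r')) ∧
    (∀ r' > 0, r' = r * ((t r') ^ 2 - 1) / (2 * (t r' - Real.cos β))) ∧
    (∀ r' > 0,
      HasDerivAt (fun s : ℝ => r * (s ^ 2 - 1) / (2 * (s - Real.cos β)))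
        (r * fbeta β (t r') / (t r' - Real.cos β)) (t r') ∧
      0 < r * fbeta β (t r') / (t r' - Real.cos β)) := by
  obtain rfl : t = rayParam r (cos β) := funext fun x => by rw [ht, hρ, rayParam]
  have hinv := invOn_radiusOfParam_rayParam hr hβ
  have hcos_lt : ∀ x > (0 : ℝ), cos β < rayParam r (cos β) x :=
    fun x hx => hβ.trans (one_lt_rayParam hr hβ hx)
  refine ⟨contDiffOn_rayParam hr hβ, strictMonoOn_rayParam hr hβ,
    hinv.bijOn (fun _ hx => one_lt_rayParam hr hβ hx) (fun _ hs => radiusOfParam_pos hr hβ hs),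
    fun x hx => (hρ x).trans (sqrt_eq_mul_fbeta_rayParam hr hβ hx),
    fun x hx => (hinv.1 hx).symm, fun x hx => ⟨?_, ?_⟩⟩
  · exact hasDerivAt_radiusOfParam (ne_of_gt (hcos_lt x hx))
  · exact div_pos (mul_pos hr (fbeta_pos (hcos_lt x hx))) (sub_pos.2 (hcos_lt x hx))
end

section
/- Let k > 0. There exists a constant C > 0, independent of r and β, such that for every r > 0 and every β ∈ ℝ with sin β ≠ 0, the improper integral ∫₁^∞ (d/dt)( f_β(t)^{−3/2}/(t − cos β) ) · e^{i k r t} dt converges absolutely and satisfies |∫₁^∞ (d/dt)( f_β(t)^{−3/2}/(t − cos β) ) e^{i k r t} dt| ≤ C·|sin β|^{−5/2}. -/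
open Real MeasureTheory Set Filter Topology

theorem integrableOn_Ioi_deriv_and_integral_abs_eq_of_unimodal {g g' : ℝ → ℝ} {a T l : ℝ}
    (haT : a ≤ T) (hderiv : ∀ x ∈ Ici a, HasDerivAt g (g' x) x)
    (hinc : ∀ x ∈ Ioc a T, 0 ≤ g' x) (hdec : ∀ x ∈ Ioi T, g' x ≤ 0)
    (hg : Tendsto g atTop (𝓝 l)) :
    IntegrableOn g' (Ioi a) ∧ ∫ x in Ioi a, |g' x| = 2 * g T - g a - l := by
  have hcont : ContinuousOn g (Icc a T) := fun x hx =>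
    (hderiv x hx.1).continuousAt.continuousWithinAt
  have hint₁ : IntegrableOn g' (Ioc a T) :=
    intervalIntegral.integrableOn_deriv_of_nonneg hcont (fun x hx => hderiv x hx.1.le)
      fun x hx => hinc x (Ioo_subset_Ioc_self hx)
  have hderiv₂ : ∀ x ∈ Ici T, HasDerivAt g (g' x) x := fun x hx => hderiv x (haT.trans hx)
  have hint₂ : IntegrableOn g' (Ioi T) := integrableOn_Ioi_deriv_of_nonpos' hderiv₂ hdec hg
  have hrise : ∫ x in Ioc a T, |g' x| = g T - g a := by
    rw [setIntegral_congr_fun measurableSet_Ioc fun x hx => abs_of_nonneg (hinc x hx),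
      ← intervalIntegral.integral_of_le haT]
    exact intervalIntegral.integral_eq_sub_of_hasDerivAt_of_le haT hcont
      (fun x hx => hderiv x hx.1.le) ((intervalIntegrable_iff_integrableOn_Ioc_of_le haT).2 hint₁)
  have hfall : ∫ x in Ioi T, |g' x| = g T - l := by
    rw [setIntegral_congr_fun measurableSet_Ioi fun x hx => abs_of_nonpos (hdec x hx),
      integral_neg, integral_Ioi_of_hasDerivAt_of_nonpos' hderiv₂ hdec hg]
    ring
  rw [← Ioc_union_Ioi_eq_Ioi haT]
  refine ⟨hint₁.union hint₂, ?_⟩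
  rw [setIntegral_union (Ioc_disjoint_Ioi le_rfl) measurableSet_Ioi hint₁.abs hint₂.abs,
    hrise, hfall]
  ring

theorem norm_ofReal_mul_exp_I_mul (x θ : ℝ) :
    ‖(x : ℂ) * Complex.exp (Complex.I * θ)‖ = |x| := by
  rw [norm_mul, Complex.norm_real, mul_comm Complex.I, Complex.norm_exp_ofReal_mul_I, mul_one,
    Real.norm_eq_abs]

theorem norm_integral_ofReal_mul_exp_I_mul_le {α : Type*} [MeasurableSpace α] (μ : Measure α)
    (φ θ : α → ℝ) :
    ‖∫ t, (φ t : ℂ) * Complex.exp (Complex.I * θ t) ∂μ‖ ≤ ∫ t, |φ t| ∂μ :=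
  (norm_integral_le_integral_norm _).trans_eq <| by
    simp_rw [norm_ofReal_mul_exp_I_mul]

theorem MeasureTheory.Integrable.ofReal_mul_exp_I_mul {α : Type*} [MeasurableSpace α]
    {μ : Measure α} {φ θ : α → ℝ} (hφ : Integrable φ μ) (hθ : Measurable θ) :
    Integrable (fun t => (φ t : ℂ) * Complex.exp (Complex.I * θ t)) μ :=
  hφ.norm.mono' (hφ.ofReal.aestronglyMeasurable.mul (by fun_prop))
    (ae_of_all _ fun t => (norm_ofReal_mul_exp_I_mul _ _).le)

noncomputable def amplitude (β t : ℝ) : ℝ := fbeta β t ^ (-(3 / 2) : ℝ) / (t - cos β)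

noncomputable def amplitudeSq (β t : ℝ) : ℝ :=
  8 * (t - cos β) / ((t - cos β) ^ 2 + sin β ^ 2) ^ 3

section

variable {β t : ℝ}

theorem cos_lt_one_of_sin_ne_zero (hβ : sin β ≠ 0) : cos β < 1 :=
  (cos_le_one β).lt_of_ne fun h => hβ <| by simpa [h] using sin_sq_add_cos_sq β

theorem fbeta_eq (β t : ℝ) :
    fbeta β t = ((t - cos β) ^ 2 + sin β ^ 2) / (2 * (t - cos β)) := by
  rw [fbeta]
  congr 1
  linear_combination -sin_sq_add_cos_sq β

theorem amplitude_eq_sqrt (ht : cos β < t) : amplitude β t = √(amplitudeSq β t) := by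
  have hu : 0 < t - cos β := sub_pos.2 ht
  have hP : 0 < (t - cos β) ^ 2 + sin β ^ 2 := by positivity
  have hf : 0 < fbeta β t := by rw [fbeta_eq]; positivity
  have hsq : (fbeta β t ^ (-(3 / 2) : ℝ)) ^ 2 = (fbeta β t ^ 3)⁻¹ := by
    rw [← rpow_natCast, ← rpow_mul hf.le, ← rpow_natCast, ← rpow_neg hf.le]
    norm_num
  have hq : 0 ≤ amplitudeSq β t := by rw [amplitudeSq]; positivity
  rw [eq_comm, amplitude, sqrt_eq_iff_eq_sq hq (div_nonneg (rpow_nonneg hf.le _) hu.le), div_pow,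
    hsq, fbeta_eq, amplitudeSq]
  field_simp
  ring

theorem hasDerivAt_amplitudeSq (ht : cos β < t) :
    HasDerivAt (amplitudeSq β)
      (8 * (sin β ^ 2 - 5 * (t - cos β) ^ 2) / ((t - cos β) ^ 2 + sin β ^ 2) ^ 4) t := by
  have hu : 0 < t - cos β := sub_pos.2 ht
  have hP : 0 < (t - cos β) ^ 2 + sin β ^ 2 := by positivity
  have hlin : HasDerivAt (fun s => s - cos β) 1 t := (hasDerivAt_id t).sub_const _
  refine ((hlin.const_mul 8).div ((hlin.fun_pow 2).add_const (sin β ^ 2) |>.fun_pow 3)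
    (pow_pos hP 3).ne') |>.congr_deriv ?_
  field_simp
  ring

theorem hasDerivAt_amplitude (ht : cos β < t) :
    HasDerivAt (amplitude β)
      (4 * (sin β ^ 2 - 5 * (t - cos β) ^ 2) /
        (((t - cos β) ^ 2 + sin β ^ 2) ^ 4 * √(amplitudeSq β t))) t := by
  have hu : 0 < t - cos β := sub_pos.2 ht
  have hq : 0 < amplitudeSq β t := by rw [amplitudeSq]; positivity
  have heq : (fun s => √(amplitudeSq β s)) =ᶠ[𝓝 t] amplitude β :=
    eventually_of_mem (Ioi_mem_nhds ht) fun s hs => (amplitude_eq_sqrt hs).symm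
  refine ((hasDerivAt_amplitudeSq ht).sqrt hq.ne').congr_of_eventuallyEq heq.symm
    |>.congr_deriv ?_
  have : 0 < √(amplitudeSq β t) := sqrt_pos.2 hq
  field_simp
  ring

theorem deriv_amplitude_nonneg (ht : cos β < t) (h : 5 * (t - cos β) ^ 2 ≤ sin β ^ 2) :
    0 ≤ deriv (amplitude β) t := by
  rw [(hasDerivAt_amplitude ht).deriv]
  exact div_nonneg (by linarith) (by positivity)

theorem deriv_amplitude_nonpos (ht : cos β < t) (h : sin β ^ 2 ≤ 5 * (t - cos β) ^ 2) :
    deriv (amplitude β) t ≤ 0 := by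
  rw [(hasDerivAt_amplitude ht).deriv]
  exact div_nonpos_of_nonpos_of_nonneg (by linarith) (by positivity)

theorem amplitude_nonneg (ht : cos β < t) : 0 ≤ amplitude β t :=
  amplitude_eq_sqrt ht ▸ sqrt_nonneg _

theorem two_mul_rpow_neg_five_halves {b : ℝ} (hb : 0 < b) :
    2 * b ^ (-(5 / 2) : ℝ) = √(4 / b ^ 5) := by
  rw [eq_comm, sqrt_eq_iff_eq_sq (by positivity) (by positivity), mul_pow,
    ← rpow_natCast (b ^ (-(5 / 2) : ℝ)) 2, ← rpow_mul hb.le]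
  norm_num [div_eq_mul_inv]

theorem amplitude_le (hβ : sin β ≠ 0) (ht : cos β < t) :
    amplitude β t ≤ 2 * |sin β| ^ (-(5 / 2) : ℝ) := by
  have hu : 0 < t - cos β := sub_pos.2 ht
  have hb : 0 < |sin β| := abs_pos.2 hβ
  rw [amplitude_eq_sqrt ht, two_mul_rpow_neg_five_halves hb, amplitudeSq]
  refine sqrt_le_sqrt ((div_le_div_iff₀ (by positivity) (by positivity)).2 ?_)
  rw [← sq_abs (sin β)]
  set u := t - cos β
  set b := |sin β|
  nlinarith [mul_nonneg (pow_nonneg hb.le 4) (sq_nonneg (u - b)), pow_nonneg hu.le 6,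
    mul_nonneg (pow_nonneg hu.le 4) (sq_nonneg b), mul_nonneg (sq_nonneg u) (pow_nonneg hb.le 4)]

theorem tendsto_fbeta_atTop (β : ℝ) : Tendsto (fbeta β) atTop atTop := by
  have hshift : Tendsto (fun t => t - cos β) atTop atTop :=
    tendsto_atTop_add_const_right _ _ tendsto_id
  refine tendsto_atTop_mono' atTop ?_ (hshift.atTop_div_const two_pos)
  filter_upwards [eventually_gt_atTop (cos β)] with t ht
  have hu : 0 < t - cos β := sub_pos.2 ht
  rw [fbeta_eq, div_le_div_iff₀ two_pos (by positivity)]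
  nlinarith [sq_nonneg (sin β)]

theorem tendsto_amplitude_atTop (β : ℝ) : Tendsto (amplitude β) atTop (𝓝 0) := by
  have hshift : Tendsto (fun t => t - cos β) atTop atTop :=
    tendsto_atTop_add_const_right _ _ tendsto_id
  have h := ((tendsto_rpow_neg_atTop (by norm_num : (0:ℝ) < 3 / 2)).comp
    (tendsto_fbeta_atTop β)).mul (tendsto_inv_atTop_zero.comp hshift)
  rw [mul_zero] at h
  exact h.congr fun t => (div_eq_mul_inv _ _).symm

theorem integrableOn_deriv_amplitude_and_integral_abs_le (hβ : sin β ≠ 0) :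
    IntegrableOn (deriv (amplitude β)) (Ioi 1) ∧
      ∫ t in Ioi 1, |deriv (amplitude β) t| ≤ 4 * |sin β| ^ (-(5 / 2) : ℝ) := by
  have hc : cos β < 1 := cos_lt_one_of_sin_ne_zero hβ
  have hσ : 0 ≤ sin β ^ 2 / 5 := by positivity
  set T := max 1 (cos β + √(sin β ^ 2 / 5))
  have hderiv : ∀ t ∈ Ici (1 : ℝ), HasDerivAt (amplitude β) (deriv (amplitude β) t) t :=
    fun t ht => (hasDerivAt_amplitude (hc.trans_le ht)).differentiableAt.hasDerivAt
  have hinc : ∀ t ∈ Ioc 1 T, 0 ≤ deriv (amplitude β) t := by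
    rintro t ⟨ht₁, htT⟩
    have hct : cos β < t := hc.trans ht₁
    have hu : t - cos β ≤ √(sin β ^ 2 / 5) := by
      have := (le_max_iff.1 htT).resolve_left ht₁.not_ge
      linarith
    have hu_sq := (le_sqrt (sub_pos.2 hct).le hσ).1 hu
    exact deriv_amplitude_nonneg hct (by linarith)
  have hdec : ∀ t ∈ Ioi T, deriv (amplitude β) t ≤ 0 := by
    intro t (htT : T < t)
    have hct : cos β < t := hc.trans ((le_max_left _ _).trans_lt htT)
    have hu : √(sin β ^ 2 / 5) < t - cos β := by
      have := (le_max_right 1 (cos β + √(sin β ^ 2 / 5))).trans_lt htT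
      linarith
    have hu_sq := (sqrt_lt' (sub_pos.2 hct)).1 hu
    exact deriv_amplitude_nonpos hct (by linarith)
  obtain ⟨hint, htv⟩ := integrableOn_Ioi_deriv_and_integral_abs_eq_of_unimodal (le_max_left _ _)
    hderiv hinc hdec (tendsto_amplitude_atTop β)
  refine ⟨hint, htv ▸ ?_⟩
  linarith [amplitude_le hβ (hc.trans_le (le_max_left 1 (cos β + √(sin β ^ 2 / 5)))),
    amplitude_nonneg hc]

end

theorem stmt3_general (k : ℝ) :
    ∃ C > 0, ∀ r β : ℝ, 0 < r → Real.sin β ≠ 0 →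
      MeasureTheory.IntegrableOn
        (fun t : ℝ =>
          ((deriv (fun s : ℝ => fbeta β s ^ (-(3 / 2) : ℝ) / (s - Real.cos β)) t : ℝ) : ℂ) *
            Complex.exp (Complex.I * ((k * r * t : ℝ) : ℂ)))
        (Set.Ici 1) ∧
      ‖∫ t in Set.Ici (1 : ℝ),
          ((deriv (fun s : ℝ => fbeta β s ^ (-(3 / 2) : ℝ) / (s - Real.cos β)) t : ℝ) : ℂ) *
            Complex.exp (Complex.I * ((k * r * t : ℝ) : ℂ))‖ ≤
        C * |Real.sin β| ^ (-(5 / 2) : ℝ) := by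
  refine ⟨4, by norm_num, fun r β _ hβ => ?_⟩
  obtain ⟨hint, htv⟩ := integrableOn_deriv_amplitude_and_integral_abs_le hβ
  refine ⟨(integrableOn_Ici_iff_integrableOn_Ioi).2
    (Integrable.ofReal_mul_exp_I_mul hint (by fun_prop)), ?_⟩
  calc _ ≤ ∫ t in Ici 1, |deriv (amplitude β) t| := norm_integral_ofReal_mul_exp_I_mul_le _ _ _
    _ = ∫ t in Ioi 1, |deriv (amplitude β) t| := integral_Ici_eq_integral_Ioi
    _ ≤ _ := htv

/-- for `k > 0` there is a constant `C > 0` (independent of `r` and `β`) such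
that for all `r > 0` and all `β` with `sin β ≠ 0`, the integral
`∫₁^∞ (d/dt)(f_β(t)^{−3/2}/(t − cos β)) e^{i k r t} dt` converges absolutely and is bounded
by `C·|sin β|^{−5/2}`. -/
theorem stmt3 (k : ℝ) (hk : 0 < k) :
    ∃ C > 0, ∀ r β : ℝ, 0 < r → Real.sin β ≠ 0 →
      MeasureTheory.IntegrableOn
        (fun t : ℝ =>
          ((deriv (fun s : ℝ => fbeta β s ^ (-(3 / 2) : ℝ) / (s - Real.cos β)) t : ℝ) : ℂ) *
            Complex.exp (Complex.I * ((k * r * t : ℝ) : ℂ)))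
        (Set.Ici 1) ∧
      ‖∫ t in Set.Ici (1 : ℝ),
          ((deriv (fun s : ℝ => fbeta β s ^ (-(3 / 2) : ℝ) / (s - Real.cos β)) t : ℝ) : ℂ) *
            Complex.exp (Complex.I * ((k * r * t : ℝ) : ℂ))‖ ≤
        C * |Real.sin β| ^ (-(5 / 2) : ℝ) :=
  stmt3_general k
end

section
/- Let h > 0 and suppose k = Mπ/h for a positive integer M (equivalently e^{2 i k h} = 1), and let x₂ ∈ ℝ. Then ξ = 0 is a zero of order exactly two of the function D(ξ) = 1 − e^{2 i μ(ξ) h}: precisely, lim_{ξ → 0} (1 − e^{2 i μ(ξ) h})/ξ² = i h/k ≠ 0. Consequently the quotient F(ξ) = (e^{−i μ(ξ) x₂} − e^{i μ(ξ)(x₂ + 2h)})/(1 − e^{2 i μ(ξ) h}) satisfies lim_{ξ → 0} ξ²·F(ξ) = −(2k/h)·sin(k x₂). -/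
/-!
Because `e^{2ikh} = 1`, `D(ξ) = 1 - e^{w(ξ)}` with `w(ξ) = 2ih(μ(ξ) - k)`, and `μ² = k² - ξ²` gives
`μ(ξ) - k = -ξ²/(μ(ξ) + k)`, where `μ(ξ) + k` has real part at least `k > 0`. Writing
`1 - e^w = -w · dslope exp 0 w` then yields `D(ξ)/ξ² = 2ih · dslope exp 0 (w(ξ)) / (μ(ξ) + k)`, a
function continuous at `0` with value `ih/k`. The numerator of `F` tends to
`e^{-ikx₂} - e^{ik(x₂+2h)} = -2i sin(kx₂)`, again by `e^{2ikh} = 1`.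
-/

open Complex Filter Topology

noncomputable def verticalWavenumber (k : ℝ) (ξ : ℂ) : ℂ :=
  ((k : ℂ) ^ 2 - ξ ^ 2) ^ ((1 : ℂ) / 2)

namespace verticalWavenumber

variable {k : ℝ}

lemma sq (k : ℝ) (ξ : ℂ) : verticalWavenumber k ξ ^ 2 = (k : ℂ) ^ 2 - ξ ^ 2 := by
  simp [verticalWavenumber, one_div]

lemma zero (hk : 0 < k) : verticalWavenumber k 0 = k := by
  simpa [verticalWavenumber, one_div] using sq_cpow_two_inv (x := (k : ℂ)) (by simpa using hk)

lemma re_nonneg (k : ℝ) (ξ : ℂ) : 0 ≤ (verticalWavenumber k ξ).re := by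
  rw [verticalWavenumber, one_div, cpow_inv_two_re]
  exact Real.sqrt_nonneg _

lemma add_ne_zero (hk : 0 < k) (ξ : ℂ) : verticalWavenumber k ξ + k ≠ 0 := by
  intro h
  have := congrArg re h
  simp only [add_re, ofReal_re, zero_re] at this
  linarith [re_nonneg k ξ]

lemma sub_eq (hk : 0 < k) (ξ : ℂ) :
    verticalWavenumber k ξ - k = -ξ ^ 2 / (verticalWavenumber k ξ + k) := by
  rw [eq_div_iff (add_ne_zero hk ξ)]
  linear_combination sq k ξ

lemma continuousAt_zero (hk : k ≠ 0) : ContinuousAt (verticalWavenumber k) 0 := by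
  have hslit : (k : ℂ) ^ 2 - 0 ^ 2 ∈ slitPlane := by
    rw [show (k : ℂ) ^ 2 - 0 ^ 2 = ((k ^ 2 : ℝ) : ℂ) by push_cast; ring]
    exact ofReal_mem_slitPlane.2 (by positivity)
  exact (continuousAt_cpow_const hslit).comp (f := fun ξ : ℂ => (k : ℂ) ^ 2 - ξ ^ 2) (by fun_prop)

end verticalWavenumber

section

local notation "μ" => verticalWavenumber

variable {k : ℝ}

lemma one_sub_exp_mul_verticalWavenumber_sub (hk : 0 < k) (c ξ : ℂ) :
    1 - exp (c * (μ k ξ - k)) = c * ξ ^ 2 * dslope exp 0 (c * (μ k ξ - k)) / (μ k ξ + k) := by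
  have h := sub_smul_dslope exp 0 (c * (μ k ξ - k))
  rw [exp_zero, sub_zero, smul_eq_mul] at h
  linear_combination h - c * dslope exp 0 (c * (μ k ξ - k)) * verticalWavenumber.sub_eq hk ξ

lemma tendsto_one_sub_exp_mul_verticalWavenumber_sub_div_sq (hk : 0 < k) (c : ℂ) :
    Tendsto (fun ξ => (1 - exp (c * (μ k ξ - k))) / ξ ^ 2) (𝓝[≠] 0) (𝓝 (c / (2 * k))) := by
  set G : ℂ → ℂ := fun ξ => c * dslope exp 0 (c * (μ k ξ - k)) / (μ k ξ + k)
  have hμ := verticalWavenumber.continuousAt_zero hk.ne'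
  have hG : ContinuousAt G 0 := by
    refine ContinuousAt.div (continuousAt_const.mul ?_) (hμ.add continuousAt_const)
      (verticalWavenumber.add_ne_zero hk 0)
    refine ContinuousAt.comp (g := dslope exp 0) ?_ (by fun_prop)
    rw [verticalWavenumber.zero hk, sub_self, mul_zero]
    exact continuousAt_dslope_same.2 differentiableAt_exp
  have hG0 : G 0 = c / (2 * k) := by
    simp only [G, verticalWavenumber.zero hk, sub_self, mul_zero, dslope_same, Complex.deriv_exp,
      exp_zero]
    ring
  refine (hG0 ▸ hG.tendsto).mono_left nhdsWithin_le_nhds |>.congr' ?_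
  filter_upwards [self_mem_nhdsWithin] with ξ (hξ : ξ ≠ 0)
  rw [one_sub_exp_mul_verticalWavenumber_sub hk]
  simp only [G]
  field_simp

end

lemma exp_two_mul_I_mul_mul_eq_one {k h : ℝ} (hh : h ≠ 0) (n : ℤ) (hk : k = n * Real.pi / h) :
    exp (2 * I * k * h) = 1 := by
  have hkh : (k : ℂ) * h = n * Real.pi := by
    exact_mod_cast (by rw [hk]; field_simp : k * h = n * Real.pi)
  rw [show 2 * I * k * h = n * (2 * Real.pi * I) by linear_combination 2 * I * hkh]
  exact exp_int_mul_two_pi_mul_I n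

lemma exp_neg_sub_exp_add_eq_of_exp_eq_one {k h : ℂ} (hcut : exp (2 * I * k * h) = 1) (x : ℂ) :
    exp (-I * k * x) - exp (I * k * (x + 2 * h)) = -2 * I * sin (k * x) := by
  rw [show I * k * (x + 2 * h) = k * x * I + 2 * I * k * h by ring, exp_add, hcut, mul_one, sin,
    show -I * k * x = -(k * x) * I by ring]
  linear_combination (exp (-(k * x) * I) - exp (k * x * I)) * I_sq

/-- in the cutoff case `k = Mπ/h` (so `e^{2ikh} = 1`), `ξ = 0` is a zero of
order exactly two of `D(ξ) = 1 − e^{2iμ(ξ)h}` (with `μ(ξ) = (k² − ξ²)^{1/2}` the principal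
branch): `D(ξ)/ξ² → ih/k ≠ 0` as `ξ → 0`, `ξ ≠ 0`, and consequently
`ξ²·F(ξ) → −(2k/h)·sin(k x₂)`. -/
theorem stmt6 (k h x₂ : ℝ) (hh : 0 < h) (M : ℕ) (hM : 0 < M)
    (hkM : k = M * Real.pi / h)
    (μ D F : ℂ → ℂ)
    (hμ : ∀ ξ : ℂ, μ ξ = ((k : ℂ) ^ 2 - ξ ^ 2) ^ ((1 : ℂ) / 2))
    (hD : ∀ ξ : ℂ, D ξ = 1 - Complex.exp (2 * Complex.I * μ ξ * (h : ℂ)))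
    (hF : ∀ ξ : ℂ, F ξ =
      (Complex.exp (-Complex.I * μ ξ * (x₂ : ℂ)) -
        Complex.exp (Complex.I * μ ξ * ((x₂ : ℂ) + 2 * (h : ℂ)))) / D ξ) :
    Filter.Tendsto (fun ξ : ℂ => D ξ / ξ ^ 2)
      (nhdsWithin (0 : ℂ) {(0 : ℂ)}ᶜ)
      (nhds (Complex.I * (h : ℂ) / (k : ℂ))) ∧
    (Complex.I * (h : ℂ) / (k : ℂ)) ≠ 0 ∧
    Filter.Tendsto (fun ξ : ℂ => ξ ^ 2 * F ξ)
      (nhdsWithin (0 : ℂ) {(0 : ℂ)}ᶜ)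
      (nhds (-((2 * k / h : ℝ) : ℂ) * ((Real.sin (k * x₂) : ℝ) : ℂ))) := by
  have hk : 0 < k := by rw [hkM]; positivity
  have hcut := exp_two_mul_I_mul_mul_eq_one hh.ne' M (by exact_mod_cast hkM)
  obtain rfl : μ = verticalWavenumber k := funext hμ
  have hD' (ξ : ℂ) : D ξ = 1 - exp (2 * I * h * (verticalWavenumber k ξ - k)) := by
    rw [hD, show 2 * I * verticalWavenumber k ξ * h = 2 * I * h * (verticalWavenumber k ξ - k) +
      2 * I * k * h by ring, exp_add, hcut, mul_one]
  have hDlim : Tendsto (fun ξ => D ξ / ξ ^ 2) (𝓝[≠] 0) (𝓝 (I * h / k)) := by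
    convert tendsto_one_sub_exp_mul_verticalWavenumber_sub_div_sq hk (2 * I * h) using 2
    · rw [hD']
    · field_simp
  have hne : I * h / k ≠ 0 := by simp [hh.ne', hk.ne']
  refine ⟨hDlim, hne, ?_⟩
  have hμ0 := verticalWavenumber.continuousAt_zero hk.ne'
  have hnum : ContinuousAt (fun ξ => exp (-I * verticalWavenumber k ξ * x₂) -
      exp (I * verticalWavenumber k ξ * (x₂ + 2 * h))) 0 := by fun_prop
  convert (hnum.tendsto.mono_left nhdsWithin_le_nhds).div hDlim hne using 1
  · ext ξ; rw [hF, Pi.div_apply, div_div_eq_mul_div]; ring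
  · rw [verticalWavenumber.zero hk, exp_neg_sub_exp_add_eq_of_exp_eq_one hcut]
    push_cast
    field_simp
end

section
/- Let k > 0 and let P : [−π/2, π/2] → ℂ be three times continuously differentiable with P(−π/2) = P(π/2) = 0. Define u(r, α) = ∫_{−π/2}^{π/2} P(φ) e^{i r k sin(α − φ)} dφ. Then there exists a constant C > 0 such that for all r ≥ 1 and all α ∈ [π/4, 3π/4], |∂_r u(r, α) − i k u(r, α)| ≤ C·r^{−3/2}, with C independent of r and α; that is, u satisfies the Sommerfeld radiation condition with rate r^{−3/2}, uniformly in the direction α. -/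
/-!
Differentiating under the integral sign,
`∂ᵣu - i k u = i k ∫ P(φ) (sin(α - φ) - 1) e^{i r k sin(α - φ)} dφ`.
Write `1 - sin θ = w(θ) cos θ` with `w(θ) = cos θ / (1 + sin θ)`, which is smooth and bounded
for `θ = α - φ ∈ [-π/4, 5π/4]`. Since `-i r k cos(α - φ) e^{i r k sin(α - φ)}` is the
`φ`-derivative of the exponential, one integration by parts (no boundary terms, as
`P(±π/2) = 0`) turns the defect into `-r⁻¹ ∫ B(φ) e^{i r k sin(α - φ)} dφ` with
`B = ∂_φ (P(φ) w(α - φ))` of class `C¹`. This oscillatory integral is `O(r^{-1/2})`: its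
phase has a single nondegenerate stationary point `φ₀ = α - π/2`; a window of width
`δ ∼ r^{-1/2}` around it contributes `O(δ)`, and on each tail an integration by parts against
the phase contributes `O(1 / (r δ))`. All constants depend only on `k` and the sup norms of
`P`, `P'`, `P''`, hence are uniform in `α`.
-/

open Real MeasureTheory Set intervalIntegral

lemma ContDiffOn.hasDerivAt_derivWithin_Icc {E : Type*} [NormedAddCommGroup E]
    [NormedSpace ℝ E] {f : ℝ → E} {n : WithTop ℕ∞} {a b x : ℝ}
    (hf : ContDiffOn ℝ n f (Icc a b)) (hn : n ≠ 0) (hx : x ∈ Ioo a b) :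
    HasDerivAt f (derivWithin f (Icc a b) x) x :=
  ((hf.differentiableOn hn) x (Ioo_subset_Icc_self hx)).hasDerivWithinAt.hasDerivAt
    (Icc_mem_nhds hx.1 hx.2)

namespace SommerfeldRadiation

lemma div_four_le_sin {s : ℝ} (h0 : 0 ≤ s) (h1 : s ≤ 3 * π / 4) : s / 4 ≤ sin s := by
  rcases le_total s (π / 2) with hs | hs
  · have hjordan := mul_le_sin h0 hs
    have : s / 4 ≤ 2 / π * s := by
      rw [div_mul_eq_mul_div, div_le_div_iff₀ (by norm_num) pi_pos]
      nlinarith [pi_le_four]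
    linarith
  · -- `sin s ≥ sin (3π/4) = √2/2 > 3π/16`
    have hcos : cos (π / 4) ≤ cos (s - π / 2) :=
      cos_le_cos_of_nonneg_of_le_pi (by linarith) (by linarith [pi_pos]) (by linarith)
    rw [cos_pi_div_four, cos_sub_pi_div_two] at hcos
    nlinarith [sq_sqrt (show (0 : ℝ) ≤ 2 by norm_num), sqrt_nonneg 2, pi_lt_d2]

lemma quarter_le_one_add_sin_sub {α φ : ℝ} (hα : α ∈ Icc (π / 4) (3 * π / 4))
    (hφ : φ ∈ Icc (-(π / 2)) (π / 2)) : 1 / 4 ≤ 1 + sin (α - φ) := by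
  obtain ⟨hα₁, hα₂⟩ := hα
  obtain ⟨hφ₁, hφ₂⟩ := hφ
  have hcos : cos (3 * π / 4) ≤ cos (α - φ - π / 2) := by
    rw [← cos_abs (α - φ - π / 2)]
    exact cos_le_cos_of_nonneg_of_le_pi (abs_nonneg _) (by linarith [pi_pos])
      (abs_le.mpr ⟨by linarith, by linarith⟩)
  rw [show 3 * π / 4 = π - π / 4 by ring, cos_pi_sub, cos_pi_div_four, cos_sub_pi_div_two] at hcos
  nlinarith [sq_sqrt (show (0 : ℝ) ≤ 2 by norm_num), sqrt_nonneg 2]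

lemma one_add_sin_sub_ne_zero {α φ : ℝ} (hα : α ∈ Icc (π / 4) (3 * π / 4))
    (hφ : φ ∈ Icc (-(π / 2)) (π / 2)) : 1 + sin (α - φ) ≠ 0 :=
  ((one_div_pos.mpr four_pos).trans_le (quarter_le_one_add_sin_sub hα hφ)).ne'

lemma norm_integral_le_of_norm_le_div_sq {E : Type*} [NormedAddCommGroup E] [NormedSpace ℝ E]
    {f : ℝ → E} {K p q : ℝ} (hp : 0 < p) (hpq : p ≤ q)
    (hf : ∀ s ∈ Icc p q, ‖f s‖ ≤ K / s ^ 2) :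
    ‖∫ s in p..q, f s‖ ≤ K / p := by
  have hK : 0 ≤ K := by
    have := (norm_nonneg _).trans (hf p ⟨le_rfl, hpq⟩)
    rwa [le_div_iff₀ (by positivity), zero_mul] at this
  have hne : ∀ s ∈ uIcc p q, s ≠ 0 := fun s hs =>
    (hp.trans_le (by rw [uIcc_of_le hpq] at hs; exact hs.1)).ne'
  have hcont : ContinuousOn (fun s : ℝ => (s ^ 2)⁻¹) (uIcc p q) :=
    (continuousOn_pow 2).inv₀ fun s hs => pow_ne_zero 2 (hne s hs)
  refine (intervalIntegral.norm_integral_le_of_norm_le hpq (ae_of_all _ fun s hs => ?_)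
    (ContinuousOn.intervalIntegrable (u := fun s => K * (s ^ 2)⁻¹)
      (continuousOn_const.mul hcont))).trans ?_
  · simpa only [div_eq_mul_inv] using hf s (Ioc_subset_Icc_self hs)
  rw [intervalIntegral.integral_const_mul, integral_eq_sub_of_hasDerivAt (f := fun s => -s⁻¹)
    (fun s hs => (hasDerivAt_inv (hne s hs)).neg.congr_deriv (neg_neg _))
    hcont.intervalIntegrable]
  have : 0 < q⁻¹ := inv_pos.mpr (hp.trans_le hpq)
  rw [div_eq_mul_inv]
  exact mul_le_mul_of_nonneg_left (by linarith) hK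

lemma norm_I_mul_ofReal (x : ℝ) : ‖Complex.I * (x : ℂ)‖ = |x| := by simp

lemma norm_mul_ofReal_le {z : ℂ} {x M c : ℝ} (hz : ‖z‖ ≤ M) (hx : |x| ≤ c) :
    ‖z * x‖ ≤ M * c := by
  rw [norm_mul, Complex.norm_real, Real.norm_eq_abs]
  exact mul_le_mul hz hx (abs_nonneg _) ((norm_nonneg _).trans hz)

lemma I_mul_ofReal_inv_mul_I_mul_ofReal_neg {x : ℝ} (hx : x ≠ 0) :
    Complex.I * ((x⁻¹ : ℝ) : ℂ) * (Complex.I * ((-x : ℝ) : ℂ)) = 1 := by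
  have hx' : (x : ℂ) ≠ 0 := by exact_mod_cast hx
  push_cast
  field_simp
  simp

lemma inv_mul_sin_le {c s : ℝ} (hc : 0 < c) (hs : 0 < s) (hs' : s ≤ 3 * π / 4) :
    (c * sin s)⁻¹ ≤ 4 / (c * s) := by
  have hsin := div_four_le_sin hs.le hs'
  rw [inv_le_comm₀ (by nlinarith) (by positivity), inv_div, div_le_iff₀ four_pos]
  nlinarith [mul_le_mul_of_nonneg_left hsin hc.le]

lemma abs_mul_cos_div_sq_le {c s : ℝ} (hc : 0 < c) (hs : 0 < s) (hs' : s ≤ 3 * π / 4) :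
    |c * cos s / (c * sin s) ^ 2| ≤ 16 / (c * s ^ 2) := by
  have hsin := div_four_le_sin hs.le hs'
  have hsq : s ^ 2 ≤ 16 * sin s ^ 2 := by nlinarith
  have hcsin : 0 < c * sin s := mul_pos hc (by linarith)
  rw [abs_div, abs_mul, abs_of_pos hc, abs_pow, sq_abs, div_le_div_iff₀ (by positivity)
    (by positivity)]
  nlinarith [mul_le_mul_of_nonneg_left hsq (sq_nonneg c),
    mul_le_mul_of_nonneg_right (abs_cos_le_one s) (by positivity : 0 ≤ c ^ 2 * s ^ 2)]

lemma norm_integral_mul_exp_cos_le {c p q MA MA' : ℝ} {A A' : ℝ → ℂ} (hc : 0 < c)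
    (hp : 0 < p) (hpq : p ≤ q) (hq : q ≤ 3 * π / 4)
    (hA : ContinuousOn A (Icc p q)) (hA' : ContinuousOn A' (Icc p q))
    (hderiv : ∀ s ∈ Ioo p q, HasDerivAt A (A' s) s)
    (hMA : ∀ s ∈ Icc p q, ‖A s‖ ≤ MA) (hMA' : ∀ s ∈ Icc p q, ‖A' s‖ ≤ MA') :
    ‖∫ s in p..q, A s * Complex.exp (Complex.I * ((c * cos s : ℝ) : ℂ))‖ ≤
      (24 * MA + 3 * π * MA') / (c * p) := by
  have hMA0 : 0 ≤ MA := (norm_nonneg _).trans (hMA p ⟨le_rfl, hpq⟩)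
  have hMA'0 : 0 ≤ MA' := (norm_nonneg _).trans (hMA' p ⟨le_rfl, hpq⟩)
  have hpos : ∀ s ∈ Icc p q, 0 < s := fun s hs => hp.trans_le hs.1
  have hle : ∀ s ∈ Icc p q, s ≤ 3 * π / 4 := fun s hs => hs.2.trans hq
  have hsin0 : ∀ s ∈ Icc p q, 0 < c * sin s := fun s hs => mul_pos hc
    ((div_pos (hpos s hs) four_pos).trans_le (div_four_le_sin (hpos s hs).le (hle s hs)))
  set E : ℝ → ℂ := fun s => Complex.exp (Complex.I * ((c * cos s : ℝ) : ℂ))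
  set E' : ℝ → ℂ := fun s => E s * (Complex.I * ((c * -sin s : ℝ) : ℂ))
  -- `A E = (A m) E'` with `m = I / (c sin)`, so one integration by parts gains a factor `1 / c`.
  set m : ℝ → ℂ := fun s => Complex.I * (((c * sin s)⁻¹ : ℝ) : ℂ)
  set m' : ℝ → ℂ := fun s => Complex.I * ((-(c * cos s) / (c * sin s) ^ 2 : ℝ) : ℂ)
  have hE : ∀ s, HasDerivAt E (E' s) s := fun s =>
    ((((hasDerivAt_cos s).const_mul c).ofReal_comp).const_mul Complex.I).cexp
  have hm : ∀ s ∈ Icc p q, HasDerivAt m (m' s) s := fun s hs =>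
    ((((hasDerivAt_sin s).const_mul c).inv (hsin0 s hs).ne').ofReal_comp).const_mul Complex.I
  have hnormE : ∀ s, ‖E s‖ = 1 := fun s => Complex.norm_exp_I_mul_ofReal _
  have hnorm_m : ∀ s ∈ Icc p q, ‖m s‖ ≤ 4 / (c * s) := fun s hs => by
    rw [norm_I_mul_ofReal, abs_of_pos (inv_pos.mpr (hsin0 s hs))]
    exact inv_mul_sin_le hc (hpos s hs) (hle s hs)
  have hnorm_m' : ∀ s ∈ Icc p q, ‖m' s‖ ≤ 16 / (c * s ^ 2) := fun s hs => by
    rw [norm_I_mul_ofReal, neg_div, abs_neg]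
    exact abs_mul_cos_div_sq_le hc (hpos s hs) (hle s hs)
  set h : ℝ → ℂ := fun s => A s * m s
  set h' : ℝ → ℂ := fun s => A' s * m s + A s * m' s
  have hcont_m : ContinuousOn m (Icc p q) := fun s hs => (hm s hs).continuousAt.continuousWithinAt
  have hcont_m' : ContinuousOn m' (Icc p q) :=
    continuousOn_const.mul (Complex.continuous_ofReal.comp_continuousOn (ContinuousOn.div
      (by fun_prop) (by fun_prop) fun s hs => pow_ne_zero 2 (hsin0 s hs).ne'))
  have hibp := integral_mul_deriv_eq_deriv_mul_of_hasDerivAt (u := h) (v := E) (u' := h')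
    (v' := E') (by rw [uIcc_of_le hpq]; exact hA.mul hcont_m) (by fun_prop)
    (fun s hs => by
      rw [min_eq_left hpq, max_eq_right hpq] at hs
      exact (hderiv s hs).mul (hm s (Ioo_subset_Icc_self hs)))
    (fun s _ => hE s)
    (((hA'.mul hcont_m).add (hA.mul hcont_m')).intervalIntegrable_of_Icc hpq)
    ((by fun_prop : Continuous E').intervalIntegrable p q)
  have hAE : ∀ s ∈ uIcc p q, A s * E s = h s * E' s := by
    intro s hs
    rw [uIcc_of_le hpq] at hs
    have hmE : m s * (Complex.I * ((c * -sin s : ℝ) : ℂ)) = 1 := by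
      simpa only [mul_neg] using I_mul_ofReal_inv_mul_I_mul_ofReal_neg (hsin0 s hs).ne'
    linear_combination (-(A s * E s)) * hmE
  have hbdry : ∀ s ∈ Icc p q, ‖h s * E s‖ ≤ 4 * MA / (c * p) := by
    intro s hs
    rw [norm_mul, hnormE, mul_one, norm_mul, mul_comm 4 MA, mul_div_assoc]
    refine mul_le_mul (hMA s hs) ((hnorm_m s hs).trans ?_) (norm_nonneg _) hMA0
    exact div_le_div_of_nonneg_left four_pos.le (mul_pos hc hp)
      (mul_le_mul_of_nonneg_left hs.1 hc.le)
  have hint : ∀ s ∈ Icc p q, ‖h' s * E s‖ ≤ (3 * π * MA' + 16 * MA) / c / s ^ 2 := by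
    intro s hs
    have hs0 := hpos s hs
    have h4 : 4 / (c * s) ≤ 3 * π / (c * s ^ 2) := by
      rw [div_le_div_iff₀ (by positivity) (by positivity)]
      nlinarith [hs.2, mul_pos hc hs0]
    rw [norm_mul, hnormE, mul_one]
    calc ‖h' s‖ ≤ MA' * (3 * π / (c * s ^ 2)) + MA * (16 / (c * s ^ 2)) := by
          refine (norm_add_le _ _).trans (add_le_add ?_ ?_) <;> rw [norm_mul]
          · exact mul_le_mul (hMA' s hs) ((hnorm_m s hs).trans h4) (norm_nonneg _) hMA'0
          · exact mul_le_mul (hMA s hs) (hnorm_m' s hs) (norm_nonneg _) hMA0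
      _ = (3 * π * MA' + 16 * MA) / c / s ^ 2 := by field_simp
  rw [integral_congr hAE, hibp]
  calc ‖h q * E q - h p * E p - ∫ s in p..q, h' s * E s‖
      ≤ ‖h q * E q‖ + ‖h p * E p‖ + ‖∫ s in p..q, h' s * E s‖ :=
        (norm_sub_le _ _).trans (add_le_add_left (norm_sub_le _ _) _)
    _ ≤ 4 * MA / (c * p) + 4 * MA / (c * p) + (3 * π * MA' + 16 * MA) / c / p := by
        gcongr
        exacts [hbdry q ⟨hpq, le_rfl⟩, hbdry p ⟨le_rfl, hpq⟩,
          norm_integral_le_of_norm_le_div_sq hp hpq hint]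
    _ = (24 * MA + 3 * π * MA') / (c * p) := by field_simp; ring

lemma norm_integral_mul_exp_sin_le {lam δ α MB MB' : ℝ} {B B' : ℝ → ℂ} (hlam : 0 < lam)
    (hδ : 0 < δ) (hδ' : δ ≤ π / 4) (hα : α ∈ Icc (π / 4) (3 * π / 4))
    (hB : ContinuousOn B (Icc (-(π / 2)) (π / 2)))
    (hB' : ContinuousOn B' (Icc (-(π / 2)) (π / 2)))
    (hderiv : ∀ φ ∈ Ioo (-(π / 2)) (π / 2), HasDerivAt B (B' φ) φ)
    (hMB : ∀ φ ∈ Icc (-(π / 2)) (π / 2), ‖B φ‖ ≤ MB)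
    (hMB' : ∀ φ ∈ Icc (-(π / 2)) (π / 2), ‖B' φ‖ ≤ MB') :
    ‖∫ φ in (-(π / 2))..(π / 2), B φ * Complex.exp (Complex.I * ((lam * sin (α - φ) : ℝ) : ℂ))‖
      ≤ 2 * δ * MB + 2 * ((24 * MB + 3 * π * MB') / (lam * δ)) := by
  obtain ⟨hα1, hα2⟩ := hα
  -- the phase is stationary at `φ₀`; cut out `[φ₀ - δ, φ₀ + δ]` and treat the tails by parts
  set φ₀ := α - π / 2 with hφ₀
  have hφ₀1 : -(π / 4) ≤ φ₀ := by linarith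
  have hφ₀2 : φ₀ ≤ π / 4 := by linarith
  have hπ := pi_pos
  set f : ℝ → ℂ := fun φ => B φ * Complex.exp (Complex.I * ((lam * sin (α - φ) : ℝ) : ℂ))
  have hf : ContinuousOn f (Icc (-(π / 2)) (π / 2)) := hB.mul (by fun_prop)
  have hint : ∀ a b, -(π / 2) ≤ a → a ≤ b → b ≤ π / 2 → IntervalIntegrable f volume a b :=
    fun a b ha hab hb => (hf.mono (Icc_subset_Icc ha hb)).intervalIntegrable_of_Icc hab
  have hsplit : ∫ φ in (-(π / 2))..(π / 2), f φ =
      (∫ φ in (-(π / 2))..(φ₀ - δ), f φ) + (∫ φ in (φ₀ - δ)..(φ₀ + δ), f φ) +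
        ∫ φ in (φ₀ + δ)..(π / 2), f φ := by
    rw [integral_add_adjacent_intervals (hint _ _ le_rfl (by linarith) (by linarith))
        (hint _ _ (by linarith) (by linarith) (by linarith)),
      integral_add_adjacent_intervals (hint _ _ le_rfl (by linarith) (by linarith))
        (hint _ _ (by linarith) (by linarith) le_rfl)]
  have hmid : ‖∫ φ in (φ₀ - δ)..(φ₀ + δ), f φ‖ ≤ 2 * δ * MB := by
    refine (intervalIntegral.norm_integral_le_of_norm_le_const (C := MB) fun φ hφ => ?_).trans_eq ?_
    · rw [uIoc_of_le (by linarith)] at hφ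
      rw [norm_mul, Complex.norm_exp_I_mul_ofReal, mul_one]
      exact hMB φ ⟨by linarith [hφ.1], by linarith [hφ.2]⟩
    · rw [show φ₀ + δ - (φ₀ - δ) = 2 * δ by ring, abs_of_pos (by positivity)]
      ring
  have hright : ‖∫ φ in (φ₀ + δ)..(π / 2), f φ‖ ≤ (24 * MB + 3 * π * MB') / (lam * δ) := by
    have hmaps : MapsTo (fun x => φ₀ + x) (Icc δ (π / 2 - φ₀)) (Icc (-(π / 2)) (π / 2)) :=
      fun x hx => ⟨by linarith [hx.1], by linarith [hx.2]⟩
    have hcv : ∫ φ in (φ₀ + δ)..(π / 2), f φ = ∫ x in δ..(π / 2 - φ₀),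
        B (φ₀ + x) * Complex.exp (Complex.I * ((lam * cos x : ℝ) : ℂ)) := by
      rw [← add_sub_cancel φ₀ (π / 2), ← integral_comp_add_left, add_sub_cancel]
      refine integral_congr fun x _ => ?_
      simp only [f, show α - (φ₀ + x) = π / 2 - x by ring, sin_pi_div_two_sub]
    rw [hcv]
    exact norm_integral_mul_exp_cos_le hlam hδ (by linarith) (by linarith)
      (hB.comp (by fun_prop) hmaps) (hB'.comp (by fun_prop) hmaps)
      (fun x hx => (hderiv _ ⟨by linarith [hx.1], by linarith [hx.2]⟩).comp_const_add φ₀ x)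
      (fun x hx => hMB _ (hmaps hx)) (fun x hx => hMB' _ (hmaps hx))
  have hleft : ‖∫ φ in (-(π / 2))..(φ₀ - δ), f φ‖ ≤ (24 * MB + 3 * π * MB') / (lam * δ) := by
    have hmaps : MapsTo (fun x => φ₀ - x) (Icc δ (π / 2 + φ₀)) (Icc (-(π / 2)) (π / 2)) :=
      fun x hx => ⟨by linarith [hx.2], by linarith [hx.1]⟩
    have hcv : ∫ φ in (-(π / 2))..(φ₀ - δ), f φ = ∫ x in δ..(π / 2 + φ₀),
        B (φ₀ - x) * Complex.exp (Complex.I * ((lam * cos x : ℝ) : ℂ)) := by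
      rw [show -(π / 2) = φ₀ - (π / 2 + φ₀) by ring, ← integral_comp_sub_left]
      refine integral_congr fun x _ => ?_
      simp only [f, show α - (φ₀ - x) = x + π / 2 by ring, sin_add_pi_div_two]
    rw [hcv]
    exact norm_integral_mul_exp_cos_le hlam hδ (by linarith) (by linarith)
      (hB.comp (by fun_prop) hmaps) (hB'.comp (by fun_prop) hmaps).neg
      (fun x hx => (hderiv _ ⟨by linarith [hx.2], by linarith [hx.1]⟩).comp_const_sub φ₀ x)
      (fun x hx => hMB _ (hmaps hx)) (fun x hx => (norm_neg _).trans_le (hMB' _ (hmaps hx)))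
  rw [hsplit]
  calc _ ≤ ‖∫ φ in (-(π / 2))..(φ₀ - δ), f φ‖ + ‖∫ φ in (φ₀ - δ)..(φ₀ + δ), f φ‖ +
        ‖∫ φ in (φ₀ + δ)..(π / 2), f φ‖ := norm_add₃_le
    _ ≤ _ := by linarith

lemma hasDerivAt_integral_mul_exp {a b r : ℝ} {f : ℝ → ℂ} {g : ℝ → ℝ} (hab : a ≤ b)
    (hf : ContinuousOn f (Icc a b)) (hg : ContinuousOn g (Icc a b)) :
    HasDerivAt (fun s : ℝ => ∫ φ in a..b, f φ * Complex.exp (Complex.I * ((s * g φ : ℝ) : ℂ)))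
      (∫ φ in a..b, f φ * (Complex.exp (Complex.I * ((r * g φ : ℝ) : ℂ)) *
        (Complex.I * (g φ : ℂ)))) r := by
  set F : ℝ → ℝ → ℂ := fun s φ => f φ * Complex.exp (Complex.I * ((s * g φ : ℝ) : ℂ))
  set F' : ℝ → ℝ → ℂ := fun s φ =>
    f φ * (Complex.exp (Complex.I * ((s * g φ : ℝ) : ℂ)) * (Complex.I * (g φ : ℂ)))
  have hF : ∀ s, ContinuousOn (F s) (Icc a b) := fun s => by fun_prop
  have hF' : ∀ s, ContinuousOn (F' s) (Icc a b) := fun s => by fun_prop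
  obtain ⟨M, hM⟩ := isCompact_Icc.exists_bound_of_continuousOn
    (show ContinuousOn (fun φ => f φ * (g φ : ℂ)) (Icc a b) by fun_prop)
  have hmeas : ∀ s, AEStronglyMeasurable (F s) (volume.restrict (uIoc a b)) := fun s => by
    rw [uIoc_of_le hab]
    exact ((hF s).mono Ioc_subset_Icc_self).aestronglyMeasurable measurableSet_Ioc
  have hmeas' : AEStronglyMeasurable (F' r) (volume.restrict (uIoc a b)) := by
    rw [uIoc_of_le hab]
    exact ((hF' r).mono Ioc_subset_Icc_self).aestronglyMeasurable measurableSet_Ioc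
  have hbound : ∀ φ ∈ uIoc a b, ∀ s ∈ Metric.ball r 1, ‖F' s φ‖ ≤ M := fun φ hφ s _ => by
    rw [uIoc_of_le hab] at hφ
    refine le_of_eq_of_le ?_ (hM φ (Ioc_subset_Icc_self hφ))
    simp only [F', norm_mul, Complex.norm_exp_I_mul_ofReal, Complex.norm_I, one_mul]
  have hderiv : ∀ φ, ∀ s, HasDerivAt (fun s => F s φ) (F' s φ) s := fun φ s => by
    have := (((hasDerivAt_id s).mul_const (g φ)).ofReal_comp.const_mul Complex.I).cexp.const_mul
      (f φ)
    simpa only [id, one_mul] using this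
  exact (intervalIntegral.hasDerivAt_integral_of_dominated_loc_of_deriv_le
    (Metric.ball_mem_nhds r one_pos) (.of_forall hmeas) ((hF r).intervalIntegrable_of_Icc hab)
    hmeas' (.of_forall hbound) intervalIntegrable_const
    (.of_forall fun φ _ s _ => hderiv φ s)).2

/-- `tan (π / 4 - θ / 2)`, in the form that makes `1 - sin θ = weight θ * cos θ` a field
identity. -/
noncomputable def weight (θ : ℝ) : ℝ := cos θ / (1 + sin θ)

lemma one_sub_sin_eq_weight_mul_cos {θ : ℝ} (h : 1 + sin θ ≠ 0) :
    1 - sin θ = weight θ * cos θ := by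
  rw [weight]
  field_simp
  linear_combination -(sin_sq_add_cos_sq θ)

lemma hasDerivAt_weight {θ : ℝ} (h : 1 + sin θ ≠ 0) :
    HasDerivAt weight (-(1 + sin θ)⁻¹) θ := by
  refine ((hasDerivAt_cos θ).div ((hasDerivAt_sin θ).const_add 1) h).congr_deriv ?_
  field_simp
  linear_combination -(sin_sq_add_cos_sq θ)

lemma hasDerivAt_inv_one_add_sin {θ : ℝ} (h : 1 + sin θ ≠ 0) :
    HasDerivAt (fun θ => (1 + sin θ)⁻¹) (-(cos θ / (1 + sin θ) ^ 2)) θ :=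
  (((hasDerivAt_sin θ).const_add 1).inv h).congr_deriv (neg_div _ _)

lemma abs_weight_le {θ : ℝ} (h : 1 / 4 ≤ 1 + sin θ) : |weight θ| ≤ 4 := by
  rw [weight, abs_div, abs_of_pos (show 0 < 1 + sin θ by linarith), div_le_iff₀ (by linarith)]
  nlinarith [abs_cos_le_one θ]

lemma abs_inv_one_add_sin_le {θ : ℝ} (h : 1 / 4 ≤ 1 + sin θ) : |(1 + sin θ)⁻¹| ≤ 4 := by
  rw [abs_inv, abs_of_pos (by linarith), inv_le_comm₀ (by linarith) four_pos]
  linarith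

lemma abs_cos_div_one_add_sin_sq_le {θ : ℝ} (h : 1 / 4 ≤ 1 + sin θ) :
    |cos θ / (1 + sin θ) ^ 2| ≤ 16 := by
  rw [abs_div, abs_pow, abs_of_pos (show 0 < 1 + sin θ by linarith),
    div_le_iff₀ (by positivity)]
  nlinarith [abs_cos_le_one θ]

noncomputable def amplitude (P P' : ℝ → ℂ) (α φ : ℝ) : ℂ :=
  P' φ * weight (α - φ) + P φ * ((1 + sin (α - φ))⁻¹ : ℝ)

noncomputable def amplitudeDeriv (P P' P'' : ℝ → ℂ) (α φ : ℝ) : ℂ :=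
  P'' φ * weight (α - φ) + 2 * P' φ * ((1 + sin (α - φ))⁻¹ : ℝ) +
    P φ * ((cos (α - φ) / (1 + sin (α - φ)) ^ 2 : ℝ) : ℂ)

section Amplitude

variable {P P' P'' : ℝ → ℂ} {α φ : ℝ}

lemma hasDerivAt_mul_weight (hP : HasDerivAt P (P' φ) φ) (h : 1 + sin (α - φ) ≠ 0) :
    HasDerivAt (fun φ => P φ * weight (α - φ)) (amplitude P P' α φ) φ := by
  refine (hP.mul ((hasDerivAt_weight h).comp_const_sub α φ).ofReal_comp).congr_deriv ?_
  simp [amplitude]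

lemma hasDerivAt_amplitude (hP : HasDerivAt P (P' φ) φ) (hP' : HasDerivAt P' (P'' φ) φ)
    (h : 1 + sin (α - φ) ≠ 0) :
    HasDerivAt (amplitude P P' α) (amplitudeDeriv P P' P'' α φ) φ := by
  have hinv := ((hasDerivAt_inv_one_add_sin h).comp_const_sub α φ).ofReal_comp
  refine ((hP'.mul ((hasDerivAt_weight h).comp_const_sub α φ).ofReal_comp).add
    (hP.mul hinv)).congr_deriv ?_
  simp only [amplitudeDeriv, neg_neg]
  ring

lemma continuousOn_amplitude {s : Set ℝ} (hP : ContinuousOn P s) (hP' : ContinuousOn P' s)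
    (h : ∀ φ ∈ s, 1 + sin (α - φ) ≠ 0) : ContinuousOn (amplitude P P' α) s := by
  unfold amplitude weight
  fun_prop (disch := assumption)

lemma continuousOn_amplitudeDeriv {s : Set ℝ} (hP : ContinuousOn P s) (hP' : ContinuousOn P' s)
    (hP'' : ContinuousOn P'' s) (h : ∀ φ ∈ s, 1 + sin (α - φ) ≠ 0) :
    ContinuousOn (amplitudeDeriv P P' P'' α) s := by
  have h2 : ∀ φ ∈ s, (1 + sin (α - φ)) ^ 2 ≠ 0 := fun φ hφ => pow_ne_zero 2 (h φ hφ)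
  unfold amplitudeDeriv weight
  fun_prop (disch := assumption)

lemma norm_amplitude_le {M₀ M₁ : ℝ} (hP : ‖P φ‖ ≤ M₀) (hP' : ‖P' φ‖ ≤ M₁)
    (h : 1 / 4 ≤ 1 + sin (α - φ)) : ‖amplitude P P' α φ‖ ≤ 4 * (M₀ + M₁) := by
  refine (norm_add_le _ _).trans ?_
  linarith [norm_mul_ofReal_le hP' (abs_weight_le h),
    norm_mul_ofReal_le hP (abs_inv_one_add_sin_le h)]

lemma norm_amplitudeDeriv_le {M₀ M₁ M₂ : ℝ} (hP : ‖P φ‖ ≤ M₀) (hP' : ‖P' φ‖ ≤ M₁)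
    (hP'' : ‖P'' φ‖ ≤ M₂) (h : 1 / 4 ≤ 1 + sin (α - φ)) :
    ‖amplitudeDeriv P P' P'' α φ‖ ≤ 4 * (4 * M₀ + 2 * M₁ + M₂) := by
  have h2 : ‖2 * P' φ‖ ≤ 2 * M₁ := by rw [norm_mul, Complex.norm_two]; linarith
  refine (norm_add₃_le).trans ?_
  linarith [norm_mul_ofReal_le hP'' (abs_weight_le h),
    norm_mul_ofReal_le h2 (abs_inv_one_add_sin_le h),
    norm_mul_ofReal_le hP (abs_cos_div_one_add_sin_sq_le h)]

end Amplitude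

lemma deriv_integral_sub_I_mul_integral_eq {k r α : ℝ} {P P' : ℝ → ℂ} (hr : r ≠ 0)
    (hα : ∀ φ ∈ Icc (-(π / 2)) (π / 2), 1 + sin (α - φ) ≠ 0)
    (hP : ContinuousOn P (Icc (-(π / 2)) (π / 2)))
    (hP' : ContinuousOn P' (Icc (-(π / 2)) (π / 2)))
    (hderiv : ∀ φ ∈ Ioo (-(π / 2)) (π / 2), HasDerivAt P (P' φ) φ)
    (hP₁ : P (-(π / 2)) = 0) (hP₂ : P (π / 2) = 0) :
    deriv (fun s : ℝ => ∫ φ in (-(π / 2))..(π / 2),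
        P φ * Complex.exp (Complex.I * ((s * k * sin (α - φ) : ℝ) : ℂ))) r -
      Complex.I * k * ∫ φ in (-(π / 2))..(π / 2),
        P φ * Complex.exp (Complex.I * ((r * k * sin (α - φ) : ℝ) : ℂ)) =
    -(r⁻¹ * ∫ φ in (-(π / 2))..(π / 2),
        amplitude P P' α φ * Complex.exp (Complex.I * ((r * k * sin (α - φ) : ℝ) : ℂ))) := by
  have hπ : -(π / 2) ≤ π / 2 := by linarith [pi_pos]
  set E : ℝ → ℂ := fun φ => Complex.exp (Complex.I * ((r * k * sin (α - φ) : ℝ) : ℂ))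
  set E' : ℝ → ℂ := fun φ => E φ * (Complex.I * ((r * k * -cos (α - φ) : ℝ) : ℂ))
  have hE : ∀ φ, HasDerivAt E (E' φ) φ := fun φ =>
    ((((hasDerivAt_sin (α - φ)).comp_const_sub α φ).const_mul (r * k)).ofReal_comp.const_mul
      Complex.I).cexp
  have hfun : (fun s : ℝ => ∫ φ in (-(π / 2))..(π / 2),
      P φ * Complex.exp (Complex.I * ((s * k * sin (α - φ) : ℝ) : ℂ))) =
      fun s : ℝ => ∫ φ in (-(π / 2))..(π / 2),
        P φ * Complex.exp (Complex.I * ((s * (k * sin (α - φ)) : ℝ) : ℂ)) := by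
    simp only [mul_assoc]
  rw [hfun, (hasDerivAt_integral_mul_exp (r := r) hπ hP
    (show ContinuousOn (fun φ => k * sin (α - φ)) _ by fun_prop)).deriv]
  -- `∂ᵣ - i k` brings down `i k (sin - 1) = -i k weight cos`, and `-i r k cos E = ∂_φ E`
  have hpt : ∀ φ ∈ uIcc (-(π / 2)) (π / 2),
      P φ * (Complex.exp (Complex.I * ((r * (k * sin (α - φ)) : ℝ) : ℂ)) *
        (Complex.I * ((k * sin (α - φ) : ℝ) : ℂ))) - Complex.I * k * (P φ * E φ) =
      r⁻¹ * (P φ * weight (α - φ) * E' φ) := by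
    intro φ hφ
    rw [uIcc_of_le hπ] at hφ
    have hid : ((1 - sin (α - φ) : ℝ) : ℂ) = ((weight (α - φ) * cos (α - φ) : ℝ) : ℂ) := by
      rw [one_sub_sin_eq_weight_mul_cos (hα φ hφ)]
    have hrr : (r : ℂ)⁻¹ * r = 1 := inv_mul_cancel₀ (by exact_mod_cast hr)
    rw [← mul_assoc r k]
    simp only [E', E]
    generalize Complex.exp (Complex.I * ((r * k * sin (α - φ) : ℝ) : ℂ)) = X
    push_cast at hid ⊢
    linear_combination (-(Complex.I * k * P φ * X)) * hid +
      (Complex.I * k * P φ * weight (α - φ) * X * Complex.cos (α - φ)) * hrr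
  have hw : ContinuousOn (fun φ => weight (α - φ)) (Icc (-(π / 2)) (π / 2)) := by
    unfold weight
    fun_prop (disch := assumption)
  have hibp := integral_mul_deriv_eq_deriv_mul_of_hasDerivAt (v := E) (v' := E')
    (u := fun φ => P φ * weight (α - φ)) (u' := amplitude P P' α)
    (by rw [uIcc_of_le hπ]; fun_prop) (by fun_prop)
    (fun φ hφ => by
      rw [min_eq_left hπ, max_eq_right hπ] at hφ
      exact hasDerivAt_mul_weight (hderiv φ hφ) (hα φ (Ioo_subset_Icc_self hφ)))
    (fun φ _ => hE φ)
    ((continuousOn_amplitude hP hP' hα).intervalIntegrable_of_Icc hπ)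
    ((by fun_prop : Continuous E').intervalIntegrable _ _)
  rw [← intervalIntegral.integral_const_mul, ← intervalIntegral.integral_sub ?_ ?_,
    integral_congr hpt, intervalIntegral.integral_const_mul, hibp, hP₁, hP₂]
  · simp only [zero_mul, sub_self, zero_sub, mul_neg]
    rfl
  all_goals exact ContinuousOn.intervalIntegrable_of_Icc hπ (by fun_prop)

lemma norm_deriv_integral_sub_I_mul_integral_le {k r α MB MB' : ℝ} {P P' P'' : ℝ → ℂ}
    (hk : 0 < k) (hr : 1 ≤ r) (hα : α ∈ Icc (π / 4) (3 * π / 4))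
    (hP : ContinuousOn P (Icc (-(π / 2)) (π / 2)))
    (hP' : ContinuousOn P' (Icc (-(π / 2)) (π / 2)))
    (hderiv : ∀ φ ∈ Ioo (-(π / 2)) (π / 2), HasDerivAt P (P' φ) φ)
    (hP₁ : P (-(π / 2)) = 0) (hP₂ : P (π / 2) = 0)
    (hB' : ContinuousOn (amplitudeDeriv P P' P'' α) (Icc (-(π / 2)) (π / 2)))
    (hderivB : ∀ φ ∈ Ioo (-(π / 2)) (π / 2),
      HasDerivAt (amplitude P P' α) (amplitudeDeriv P P' P'' α φ) φ)
    (hMB : ∀ φ ∈ Icc (-(π / 2)) (π / 2), ‖amplitude P P' α φ‖ ≤ MB)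
    (hMB' : ∀ φ ∈ Icc (-(π / 2)) (π / 2), ‖amplitudeDeriv P P' P'' α φ‖ ≤ MB') :
    ‖deriv (fun s : ℝ => ∫ φ in (-(π / 2))..(π / 2),
        P φ * Complex.exp (Complex.I * ((s * k * sin (α - φ) : ℝ) : ℂ))) r -
      Complex.I * k * ∫ φ in (-(π / 2))..(π / 2),
        P φ * Complex.exp (Complex.I * ((r * k * sin (α - φ) : ℝ) : ℂ))‖ ≤
      (π / 2 * MB + 8 / (π * k) * (24 * MB + 3 * π * MB')) * r ^ (-(3 / 2) : ℝ) := by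
  have hr0 : 0 < r := one_pos.trans_le hr
  have hsqrt : 1 ≤ √r := one_le_sqrt.mpr hr
  have hsin := fun φ (hφ : φ ∈ Icc (-(π / 2)) (π / 2)) => one_add_sin_sub_ne_zero hα hφ
  -- the stationary window has width `r ^ (-1/2)`, balancing `δ` against `1 / (r δ)`
  have hδ : 0 < π / (4 * √r) := by positivity
  have hδ' : π / (4 * √r) ≤ π / 4 :=
    div_le_div_of_nonneg_left pi_pos.le four_pos (by linarith)
  have hcore := norm_integral_mul_exp_sin_le (mul_pos hr0 hk) hδ hδ' hα
    (continuousOn_amplitude hP hP' hsin) hB' hderivB hMB hMB'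
  rw [deriv_integral_sub_I_mul_integral_eq hr0.ne' hsin hP hP' hderiv hP₁ hP₂, norm_neg,
    norm_mul, Complex.norm_real, norm_inv, Real.norm_eq_abs, abs_of_pos hr0]
  have hpow : r ^ (-(3 / 2) : ℝ) = (r * √r)⁻¹ := by
    rw [rpow_neg hr0.le, show (3 / 2 : ℝ) = 1 + 1 / 2 by norm_num, rpow_add hr0, rpow_one,
      ← sqrt_eq_rpow]
  calc _ ≤ r⁻¹ * (2 * (π / (4 * √r)) * MB +
        2 * ((24 * MB + 3 * π * MB') / (r * k * (π / (4 * √r))))) := by gcongr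
    _ = _ := by
      rw [hpow]
      field_simp
      rw [sq_sqrt hr0.le]
      ring

end SommerfeldRadiation

open SommerfeldRadiation

/-- Sommerfeld radiation condition for the stationary-phase integral. For
`P ∈ C³([−π/2, π/2])` with `P(±π/2) = 0` and
`u(r,α) = ∫_{−π/2}^{π/2} P(φ) e^{i r k sin(α−φ)} dφ`, there is `C > 0` with
`|∂_r u(r,α) − i k u(r,α)| ≤ C r^{−3/2}` for all `r ≥ 1`, uniformly in
`α ∈ [π/4, 3π/4]`. -/
theorem stmt8 (k : ℝ) (hk : 0 < k) (P : ℝ → ℂ)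
    (hP : ContDiffOn ℝ 3 P (Set.Icc (-(Real.pi / 2)) (Real.pi / 2)))
    (hP1 : P (-(Real.pi / 2)) = 0) (hP2 : P (Real.pi / 2) = 0)
    (u : ℝ → ℝ → ℂ)
    (hu : ∀ r α : ℝ, u r α =
      ∫ φ in (-(Real.pi / 2))..(Real.pi / 2),
        P φ * Complex.exp (Complex.I * ((r * k * Real.sin (α - φ) : ℝ) : ℂ))) :
    ∃ C > 0, ∀ r α : ℝ, 1 ≤ r → α ∈ Set.Icc (Real.pi / 4) (3 * Real.pi / 4) →
      ‖deriv (fun s : ℝ => u s α) r - Complex.I * (k : ℂ) * u r α‖ ≤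
        C * r ^ (-(3 / 2) : ℝ) := by
  have hS : UniqueDiffOn ℝ (Icc (-(π / 2)) (π / 2)) := uniqueDiffOn_Icc (by linarith [pi_pos])
  have hP' := hP.derivWithin hS (m := 2) (by norm_num)
  have hP'' := hP'.derivWithin hS (m := 1) (by norm_num)
  obtain ⟨M₀, hM₀⟩ := isCompact_Icc.exists_bound_of_continuousOn hP.continuousOn
  obtain ⟨M₁, hM₁⟩ := isCompact_Icc.exists_bound_of_continuousOn hP'.continuousOn
  obtain ⟨M₂, hM₂⟩ := isCompact_Icc.exists_bound_of_continuousOn hP''.continuousOn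
  set MB := 4 * (M₀ + M₁)
  set MB' := 4 * (4 * M₀ + 2 * M₁ + M₂)
  refine ⟨max (π / 2 * MB + 8 / (π * k) * (24 * MB + 3 * π * MB')) 1,
    lt_max_of_lt_right one_pos, fun r α hr hα => ?_⟩
  have hquarter := fun φ (hφ : φ ∈ Icc (-(π / 2)) (π / 2)) => quarter_le_one_add_sin_sub hα hφ
  have hsin := fun φ (hφ : φ ∈ Icc (-(π / 2)) (π / 2)) => one_add_sin_sub_ne_zero hα hφ
  have hdP := fun φ (hφ : φ ∈ Ioo (-(π / 2)) (π / 2)) =>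
    hP.hasDerivAt_derivWithin_Icc (by norm_num) hφ
  have hdP' := fun φ (hφ : φ ∈ Ioo (-(π / 2)) (π / 2)) =>
    hP'.hasDerivAt_derivWithin_Icc (by norm_num) hφ
  rw [show (fun s => u s α) = _ from funext fun s => hu s α, hu]
  refine (norm_deriv_integral_sub_I_mul_integral_le hk hr hα hP.continuousOn hP'.continuousOn
    hdP hP1 hP2
    (continuousOn_amplitudeDeriv hP.continuousOn hP'.continuousOn hP''.continuousOn hsin)
    (fun φ hφ => hasDerivAt_amplitude (hdP φ hφ) (hdP' φ hφ) (hsin φ (Ioo_subset_Icc_self hφ)))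
    (fun φ hφ => norm_amplitude_le (hM₀ φ hφ) (hM₁ φ hφ) (hquarter φ hφ))
    (fun φ hφ => norm_amplitudeDeriv_le (hM₀ φ hφ) (hM₁ φ hφ) (hM₂ φ hφ) (hquarter φ hφ))).trans ?_
  gcongr
  exact le_max_left _ _
end

section
/- Let k > 0 and let P : [−π/2, π/2] → ℂ be three times continuously differentiable with P(−π/2) = P(π/2) = 0. Define u(r, α) = ∫_{−π/2}^{π/2} P(φ) e^{i r k sin(α − φ)} dφ. Then there exists a constant C > 0 such that for all r ≥ 1 and all α ∈ [π/4, 3π/4], |∂_α u(r, α)| ≤ C·r^{−1/2}, with C independent of r and α; equivalently, the tangential derivative r^{−1} ∂_α u is O(r^{−3/2}) uniformly in α ∈ [π/4, 3π/4]. -/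
/-!
Differentiating under the integral sign and integrating by parts (the boundary terms vanish since
`P(±π/2) = 0`) gives `∂_α u = ∫ P'(φ) e^{i ω sin(α - φ)} dφ` with `ω = r k`. The shift
`φ = x + α - π/2` turns the phase into `ω cos x`, whose only stationary point in the range
`|x| ≤ 3π/4` is `x = 0`. The window `|x| < δ` contributes at most `2 δ sup |P'|`. Outside it
`|sin x| ≥ |x| / 4`, so a second integration by parts, against `1 / (ω sin x)`, bounds each side
by `O(1 / (ω δ))`. Taking `δ = ω^{-1/2}` gives `O(ω^{-1/2}) = O(r^{-1/2})`.
-/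

open Real Set MeasureTheory intervalIntegral
open scoped Interval

lemma div_four_le_sin {x : ℝ} (hx₀ : 0 ≤ x) (hx : x ≤ 3 * π / 4) : x / 4 ≤ sin x := by
  have hπ := pi_lt_d2
  rcases le_or_gt x (π / 2) with h | h
  · have : x / 4 ≤ 2 / π * x := by
      rw [div_mul_eq_mul_div, le_div_iff₀ pi_pos]; nlinarith [pi_gt_three]
    exact this.trans (mul_le_sin hx₀ h)
  · have hsqrt : (7 / 5 : ℝ) ≤ √2 := by
      rw [le_sqrt (by norm_num) (by norm_num)]; norm_num
    have : √2 / 2 ≤ sin x := by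
      rw [← cos_pi_div_four, ← cos_sub_pi_div_two]
      exact cos_le_cos_of_nonneg_of_le_pi (by linarith) (by linarith) (by linarith)
    linarith

lemma norm_integral_mul_deriv_mul_cexp_le {a b : ℝ} (hab : a ≤ b) {w w' : ℝ → ℂ}
    {θ θ' : ℝ → ℝ} (hw : ∀ x ∈ Icc a b, HasDerivWithinAt w (w' x) (Icc a b) x)
    (hw' : ContinuousOn w' (Icc a b))
    (hθ : ∀ x ∈ Icc a b, HasDerivWithinAt θ (θ' x) (Icc a b) x)
    (hθ' : ContinuousOn θ' (Icc a b)) :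
    ‖∫ x in a..b, w x * θ' x * Complex.exp (Complex.I * θ x)‖ ≤
      ‖w a‖ + ‖w b‖ + ∫ x in a..b, ‖w' x‖ := by
  rw [← uIcc_of_le hab] at hw hw' hθ hθ'
  have hθc : ContinuousOn θ [[a, b]] := fun x hx => (hθ x hx).continuousWithinAt
  have he : ∀ x ∈ [[a, b]], HasDerivWithinAt (fun y => Complex.exp (Complex.I * θ y))
      (Complex.exp (Complex.I * θ x) * (Complex.I * θ' x)) [[a, b]] x :=
    fun x hx => ((hθ x hx).ofReal_comp.const_mul Complex.I).cexp
  have hibp := integral_mul_deriv_eq_deriv_mul_of_hasDerivWithinAt hw he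
    hw'.intervalIntegrable (by apply ContinuousOn.intervalIntegrable; fun_prop)
  have hrw : ∫ x in a..b, w x * θ' x * Complex.exp (Complex.I * θ x) =
      -Complex.I * ∫ x in a..b, w x * (Complex.exp (Complex.I * θ x) * (Complex.I * θ' x)) := by
    rw [← intervalIntegral.integral_const_mul]
    congr 1 with x
    linear_combination (w x * θ' x * Complex.exp (Complex.I * θ x)) * Complex.I_sq
  have hint := norm_integral_le_integral_norm (μ := volume)
    (f := fun x => w' x * Complex.exp (Complex.I * θ x)) hab
  simp only [norm_mul, Complex.norm_exp_I_mul_ofReal, mul_one] at hint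
  rw [hrw, hibp, norm_mul, norm_neg, Complex.norm_I, one_mul]
  refine (norm_sub_le _ _).trans (add_le_add ((norm_sub_le _ _).trans_eq ?_) hint)
  simp only [norm_mul, Complex.norm_exp_I_mul_ofReal, mul_one, add_comm]

lemma norm_integral_mul_cexp_le_of_deriv_ne_zero {a b : ℝ} (hab : a ≤ b) {Q Q' : ℝ → ℂ}
    {θ θ' θ'' F : ℝ → ℝ} (hQ : ∀ x ∈ Icc a b, HasDerivWithinAt Q (Q' x) (Icc a b) x)
    (hQ' : ContinuousOn Q' (Icc a b))
    (hθ : ∀ x ∈ Icc a b, HasDerivWithinAt θ (θ' x) (Icc a b) x)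
    (hθ' : ∀ x ∈ Icc a b, HasDerivWithinAt θ' (θ'' x) (Icc a b) x)
    (hθ'' : ContinuousOn θ'' (Icc a b)) (hθ'_ne : ∀ x ∈ Icc a b, θ' x ≠ 0)
    (hF : ∀ x ∈ Icc a b, ‖Q' x‖ / |θ' x| + ‖Q x‖ * |θ'' x| / θ' x ^ 2 ≤ F x)
    (hF_int : IntervalIntegrable F volume a b) :
    ‖∫ x in a..b, Q x * Complex.exp (Complex.I * θ x)‖ ≤
      ‖Q a‖ / |θ' a| + ‖Q b‖ / |θ' b| + ∫ x in a..b, F x := by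
  have hQc : ContinuousOn Q (Icc a b) := fun x hx => (hQ x hx).continuousWithinAt
  have hθ'c : ContinuousOn θ' (Icc a b) := fun x hx => (hθ' x hx).continuousWithinAt
  have hw : ∀ x ∈ Icc a b, HasDerivWithinAt (fun x => Q x * ↑(θ' x)⁻¹)
      (Q' x * ↑(θ' x)⁻¹ + Q x * ↑(-θ'' x / θ' x ^ 2)) (Icc a b) x := fun x hx =>
    (hQ x hx).mul ((hθ' x hx).inv (hθ'_ne x hx)).ofReal_comp
  have hw' : ContinuousOn (fun x => Q' x * ↑(θ' x)⁻¹ + Q x * ↑(-θ'' x / θ' x ^ 2)) (Icc a b) := by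
    have hinv : ContinuousOn (fun x => (θ' x)⁻¹) (Icc a b) := hθ'c.inv₀ hθ'_ne
    have hdiv : ContinuousOn (fun x => -θ'' x / θ' x ^ 2) (Icc a b) :=
      hθ''.neg.div (hθ'c.pow 2) fun x hx => pow_ne_zero 2 (hθ'_ne x hx)
    fun_prop
  have hQ_eq : EqOn (fun x => Q x * Complex.exp (Complex.I * θ x))
      (fun x => Q x * ↑(θ' x)⁻¹ * θ' x * Complex.exp (Complex.I * θ x)) [[a, b]] :=
    fun x hx => by
    rw [uIcc_of_le hab] at hx
    simp only [mul_assoc, ← Complex.ofReal_mul, inv_mul_cancel₀ (hθ'_ne x hx),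
      Complex.ofReal_one, one_mul]
  have hnorm_w : ∀ x, ‖Q x * ↑(θ' x)⁻¹‖ = ‖Q x‖ / |θ' x| := fun x => by
    rw [norm_mul, Complex.norm_real, norm_inv, Real.norm_eq_abs, div_eq_mul_inv]
  have hnorm_w' : ∀ x ∈ Ioo a b,
      ‖Q' x * ↑(θ' x)⁻¹ + Q x * ↑(-θ'' x / θ' x ^ 2)‖ ≤ F x := fun x hx => by
    refine (norm_add_le _ _).trans (le_of_eq_of_le ?_ (hF x (Ioo_subset_Icc_self hx)))
    simp only [norm_mul, Complex.norm_real, Real.norm_eq_abs, abs_inv, abs_neg,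
      abs_pow, sq_abs, div_eq_mul_inv, mul_assoc]
  rw [integral_congr hQ_eq, ← hnorm_w, ← hnorm_w]
  exact (norm_integral_mul_deriv_mul_cexp_le hab hw hw' hθ hθ'c).trans (add_le_add_right
    (integral_mono_on_of_le_Ioo hab (hw'.norm.intervalIntegrable_of_Icc hab) hF_int hnorm_w') _)

lemma intervalIntegrable_inv_sq {a b : ℝ} (h : (0 : ℝ) ∉ [[a, b]]) :
    IntervalIntegrable (fun x : ℝ => (x ^ 2)⁻¹) volume a b :=
  intervalIntegrable_inv (fun _ hx => pow_ne_zero 2 (ne_of_mem_of_not_mem hx h))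
    (continuousOn_pow 2)

lemma integral_inv_sq {a b : ℝ} (h : (0 : ℝ) ∉ [[a, b]]) :
    ∫ x in a..b, (x ^ 2)⁻¹ = a⁻¹ - b⁻¹ := by
  have := integral_zpow (a := a) (b := b) (n := -2) (Or.inr ⟨by norm_num, h⟩)
  simp only [zpow_neg, zpow_ofNat] at this
  rw [this]
  norm_num
  ring

lemma inv_mul_sin_le_four_div {ω δ x : ℝ} (hω : 0 < ω) (hδ : 0 < δ) (hδx : δ ≤ x)
    (hx : x ≤ 3 * π / 4) : (ω * sin x)⁻¹ ≤ 4 / (ω * δ) := by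
  have h := div_four_le_sin (hδ.le.trans hδx) hx
  rw [← inv_div]
  exact inv_anti₀ (by positivity) (by nlinarith)

lemma mul_abs_cos_div_sq_le {ω x : ℝ} (hω : 0 < ω) (hx₀ : 0 < x) (hx : x ≤ 3 * π / 4) :
    ω * |cos x| / (ω * sin x) ^ 2 ≤ 16 / ω * (x ^ 2)⁻¹ := by
  have h := div_four_le_sin hx₀.le hx
  calc ω * |cos x| / (ω * sin x) ^ 2 ≤ ω / (ω * x / 4) ^ 2 :=
        div_le_div₀ hω.le (mul_le_of_le_one_right hω.le (abs_cos_le_one x)) (by positivity)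
          (pow_le_pow_left₀ (by positivity) (by nlinarith) 2)
    _ = 16 / ω * (x ^ 2)⁻¹ := by field_simp; ring

lemma norm_integral_mul_cexp_cos_le {ω δ c d M₀ M₁ : ℝ} (hω : 0 < ω) (hδ : 0 < δ)
    (hδc : δ ≤ c) (hcd : c ≤ d) (hd : d ≤ 3 * π / 4) {Q Q' : ℝ → ℂ}
    (hQ : ∀ x ∈ Icc c d, HasDerivWithinAt Q (Q' x) (Icc c d) x)
    (hQ' : ContinuousOn Q' (Icc c d))
    (hM₀ : ∀ x ∈ Icc c d, ‖Q x‖ ≤ M₀) (hM₁ : ∀ x ∈ Icc c d, ‖Q' x‖ ≤ M₁) :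
    ‖∫ x in c..d, Q x * Complex.exp (Complex.I * ↑(ω * cos x))‖ ≤
      (24 * M₀ + 12 * M₁) / (ω * δ) := by
  have hpos : ∀ x ∈ Icc c d, 0 < x := fun x hx => hδ.trans_le (hδc.trans hx.1)
  have hM₀' : 0 ≤ M₀ := (norm_nonneg _).trans (hM₀ c ⟨le_rfl, hcd⟩)
  have hM₁' : 0 ≤ M₁ := (norm_nonneg _).trans (hM₁ c ⟨le_rfl, hcd⟩)
  have hsin_pos : ∀ x ∈ Icc c d, 0 < ω * sin x := fun x hx =>
    mul_pos hω (sin_pos_of_pos_of_lt_pi (hpos x hx) (by linarith [hx.2, pi_pos]))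
  have habs : ∀ x ∈ Icc c d, |-(ω * sin x)| = ω * sin x := fun x hx => by
    rw [abs_neg, abs_of_pos (hsin_pos x hx)]
  have hend : ∀ x ∈ Icc c d, ‖Q x‖ / |-(ω * sin x)| ≤ M₀ * (4 / (ω * δ)) := fun x hx => by
    rw [habs x hx, div_eq_mul_inv]
    exact mul_le_mul (hM₀ x hx) (inv_mul_sin_le_four_div hω hδ (hδc.trans hx.1) (hx.2.trans hd))
      (inv_nonneg.2 (hsin_pos x hx).le) hM₀'
  have hF : ∀ x ∈ Icc c d, ‖Q' x‖ / |-(ω * sin x)| + ‖Q x‖ * |-(ω * cos x)| / (-(ω * sin x)) ^ 2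
      ≤ M₁ * (4 / (ω * δ)) + M₀ * (16 / ω) * (x ^ 2)⁻¹ := fun x hx => by
    rw [habs x hx, div_eq_mul_inv, abs_neg, neg_sq, abs_mul, abs_of_pos hω, mul_div_assoc,
      mul_assoc M₀]
    exact add_le_add (mul_le_mul (hM₁ x hx)
      (inv_mul_sin_le_four_div hω hδ (hδc.trans hx.1) (hx.2.trans hd))
      (inv_nonneg.2 (hsin_pos x hx).le) hM₁')
      (mul_le_mul (hM₀ x hx) (mul_abs_cos_div_sq_le hω (hpos x hx) (hx.2.trans hd))
        (by positivity) hM₀')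
  have h0 : (0 : ℝ) ∉ [[c, d]] := by
    rw [uIcc_of_le hcd]; exact fun h => (hpos 0 h).false
  have hF_int : IntervalIntegrable (fun x => M₁ * (4 / (ω * δ)) + M₀ * (16 / ω) * (x ^ 2)⁻¹)
      volume c d := intervalIntegrable_const.add ((intervalIntegrable_inv_sq h0).const_mul _)
  refine (norm_integral_mul_cexp_le_of_deriv_ne_zero hcd hQ hQ' (θ := fun x => ω * cos x)
    (θ' := fun x => -(ω * sin x)) (θ'' := fun x => -(ω * cos x))
    (fun x _ => ((hasDerivAt_cos x).const_mul ω).hasDerivWithinAt.congr_deriv (by ring))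
    (fun x _ => ((hasDerivAt_sin x).const_mul ω).fun_neg.hasDerivWithinAt)
    (by fun_prop) (fun x hx => neg_ne_zero.2 (hsin_pos x hx).ne') hF hF_int).trans ?_
  rw [integral_add intervalIntegrable_const ((intervalIntegrable_inv_sq h0).const_mul _),
    intervalIntegral.integral_const, intervalIntegral.integral_const_mul, integral_inv_sq h0,
    smul_eq_mul]
  have hdc : d - c ≤ 3 := by linarith [pi_lt_four, hpos c ⟨le_rfl, hcd⟩]
  have hcd_inv : c⁻¹ - d⁻¹ ≤ δ⁻¹ := by
    linarith [inv_pos.2 (hpos d ⟨hcd, le_rfl⟩), inv_anti₀ hδ hδc]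
  calc _ ≤ M₀ * (4 / (ω * δ)) + M₀ * (4 / (ω * δ)) +
        ((d - c) * (M₁ * (4 / (ω * δ))) + M₀ * (16 / ω) * (c⁻¹ - d⁻¹)) :=
        add_le_add_left (add_le_add (hend c ⟨le_rfl, hcd⟩) (hend d ⟨hcd, le_rfl⟩)) _
    _ ≤ M₀ * (4 / (ω * δ)) + M₀ * (4 / (ω * δ)) +
        (3 * (M₁ * (4 / (ω * δ))) + M₀ * (16 / ω) * δ⁻¹) := by
        gcongr
    _ = (24 * M₀ + 12 * M₁) / (ω * δ) := by field_simp; ring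

lemma norm_integral_mul_cexp_cos_le_add {ω δ a b M₀ M₁ : ℝ} (hω : 0 < ω) (hδ : 0 < δ)
    (ha : -(3 * π / 4) ≤ a) (haδ : a ≤ -δ) (hδb : δ ≤ b) (hb : b ≤ 3 * π / 4) {Q Q' : ℝ → ℂ}
    (hQ : ∀ x ∈ Icc a b, HasDerivWithinAt Q (Q' x) (Icc a b) x)
    (hQ' : ContinuousOn Q' (Icc a b))
    (hM₀ : ∀ x ∈ Icc a b, ‖Q x‖ ≤ M₀) (hM₁ : ∀ x ∈ Icc a b, ‖Q' x‖ ≤ M₁) :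
    ‖∫ x in a..b, Q x * Complex.exp (Complex.I * ↑(ω * cos x))‖ ≤
      2 * M₀ * δ + 2 * ((24 * M₀ + 12 * M₁) / (ω * δ)) := by
  set f := fun x => Q x * Complex.exp (Complex.I * ↑(ω * cos x))
  have hab : a ≤ b := by linarith
  have hf : IntervalIntegrable f volume a b := by
    refine ContinuousOn.intervalIntegrable ?_
    rw [uIcc_of_le hab]
    exact (fun x hx => ((hQ x hx).continuousWithinAt).mul (by fun_prop))
  have hf_sub : ∀ {c d}, a ≤ c → c ≤ d → d ≤ b → IntervalIntegrable f volume c d :=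
    fun hac hcd hdb => hf.mono_set (by
      rw [uIcc_of_le hab, uIcc_of_le hcd]; exact Icc_subset_Icc hac hdb)
  have hnorm_f : ∀ x, ‖f x‖ = ‖Q x‖ := fun x => by
    simp only [f, norm_mul, Complex.norm_exp_I_mul_ofReal, mul_one]
  have hleft : ‖∫ x in a..-δ, f x‖ ≤ (24 * M₀ + 12 * M₁) / (ω * δ) := by
    have hmaps : MapsTo Neg.neg (Icc δ (-a)) (Icc a b) := fun x hx =>
      ⟨by linarith [hx.2], by linarith [hx.1]⟩
    have h := norm_integral_mul_cexp_cos_le hω hδ le_rfl (by linarith) (by linarith)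
      (Q := fun x => Q (-x)) (Q' := fun x => -Q' (-x))
      (fun x hx => ((hQ (-x) (hmaps hx)).scomp x (hasDerivAt_neg x).hasDerivWithinAt
        hmaps).congr_deriv (by simp))
      ((hQ'.comp continuousOn_neg hmaps).neg)
      (fun x hx => hM₀ (-x) (hmaps hx)) (fun x hx => (norm_neg _).trans_le (hM₁ (-x) (hmaps hx)))
    rw [← neg_neg a, ← integral_comp_neg]
    simpa only [f, cos_neg] using h
  have hright : ‖∫ x in δ..b, f x‖ ≤ (24 * M₀ + 12 * M₁) / (ω * δ) := by
    have hsub : Icc δ b ⊆ Icc a b := Icc_subset_Icc (by linarith) le_rfl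
    exact norm_integral_mul_cexp_cos_le hω hδ le_rfl hδb hb
      (fun x hx => (hQ x (hsub hx)).mono hsub) (hQ'.mono hsub)
      (fun x hx => hM₀ x (hsub hx)) (fun x hx => hM₁ x (hsub hx))
  have hmid : ‖∫ x in -δ..δ, f x‖ ≤ 2 * M₀ * δ := by
    have h := norm_integral_le_of_norm_le_const (f := f) (a := -δ) (b := δ) (C := M₀)
      fun x hx => by
        rw [uIoc_of_le (by linarith)] at hx
        exact (hnorm_f x).trans_le (hM₀ x ⟨by linarith [hx.1], by linarith [hx.2]⟩)
    rwa [abs_of_pos (by linarith), sub_neg_eq_add, ← two_mul, mul_left_comm, ← mul_assoc] at h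
  rw [← integral_add_adjacent_intervals (hf_sub le_rfl haδ (by linarith))
      (hf_sub haδ (by linarith) le_rfl), ← integral_add_adjacent_intervals
      (hf_sub haδ (by linarith) hδb) (hf_sub (by linarith) hδb le_rfl)]
  calc _ ≤ ‖∫ x in a..-δ, f x‖ + (‖∫ x in -δ..δ, f x‖ + ‖∫ x in δ..b, f x‖) :=
        (norm_add_le _ _).trans (add_le_add_right (norm_add_le _ _) _)
    _ ≤ _ := by linarith

lemma norm_integral_mul_cexp_cos_le_rpow {ω a b M₀ M₁ : ℝ} (hω : 0 < ω)
    (ha : -(3 * π / 4) ≤ a) (ha' : a ≤ -(π / 4)) (hb' : π / 4 ≤ b) (hb : b ≤ 3 * π / 4)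
    {Q Q' : ℝ → ℂ} (hQ : ∀ x ∈ Icc a b, HasDerivWithinAt Q (Q' x) (Icc a b) x)
    (hQ' : ContinuousOn Q' (Icc a b))
    (hM₀ : ∀ x ∈ Icc a b, ‖Q x‖ ≤ M₀) (hM₁ : ∀ x ∈ Icc a b, ‖Q' x‖ ≤ M₁) :
    ‖∫ x in a..b, Q x * Complex.exp (Complex.I * ↑(ω * cos x))‖ ≤
      (50 * M₀ + 24 * M₁) * ω ^ (-(1 / 2) : ℝ) := by
  have hab : a ≤ b := by linarith [pi_pos]
  have hM₀' : 0 ≤ M₀ := (norm_nonneg _).trans (hM₀ a ⟨le_rfl, hab⟩)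
  have hM₁' : 0 ≤ M₁ := (norm_nonneg _).trans (hM₁ a ⟨le_rfl, hab⟩)
  set δ := ω ^ (-(1 / 2) : ℝ)
  have hδ : 0 < δ := rpow_pos_of_pos hω _
  rcases le_or_gt δ (π / 4) with hδπ | hπδ
  · have hωδ : ω * δ = δ⁻¹ := by
      rw [← rpow_neg_one, ← rpow_mul hω.le, ← rpow_one_add' hω.le (by norm_num)]
      norm_num
    refine (norm_integral_mul_cexp_cos_le_add hω hδ ha (by linarith) (by linarith) hb
      hQ hQ' hM₀ hM₁).trans_eq ?_
    rw [hωδ, div_inv_eq_mul]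
    ring
  · have h := norm_integral_le_of_norm_le_const (a := a) (b := b)
      (f := fun x => Q x * Complex.exp (Complex.I * ↑(ω * cos x))) (C := M₀) fun x hx => by
        rw [norm_mul, Complex.norm_exp_I_mul_ofReal, mul_one]
        exact hM₀ x (uIoc_subset_uIcc.trans (uIcc_of_le hab).subset hx)
    refine h.trans ?_
    rw [abs_of_nonneg (by linarith)]
    nlinarith

lemma norm_integral_mul_cexp_sin_sub_le_rpow {ω α M₀ M₁ : ℝ} (hω : 0 < ω)
    (hα : α ∈ Icc (π / 4) (3 * π / 4)) {Q Q' : ℝ → ℂ}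
    (hQ : ∀ x ∈ Icc (-(π / 2)) (π / 2), HasDerivWithinAt Q (Q' x) (Icc (-(π / 2)) (π / 2)) x)
    (hQ' : ContinuousOn Q' (Icc (-(π / 2)) (π / 2)))
    (hM₀ : ∀ x ∈ Icc (-(π / 2)) (π / 2), ‖Q x‖ ≤ M₀)
    (hM₁ : ∀ x ∈ Icc (-(π / 2)) (π / 2), ‖Q' x‖ ≤ M₁) :
    ‖∫ φ in -(π / 2)..π / 2, Q φ * Complex.exp (Complex.I * ↑(ω * sin (α - φ)))‖ ≤
      (50 * M₀ + 24 * M₁) * ω ^ (-(1 / 2) : ℝ) := by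
  obtain ⟨hα₁, hα₂⟩ := hα
  set c := α - π / 2 with hc
  have hmaps : MapsTo (· + c) (Icc (-α) (π - α)) (Icc (-(π / 2)) (π / 2)) := fun x hx =>
    ⟨by dsimp only; linarith [hx.1], by dsimp only; linarith [hx.2]⟩
  have h := norm_integral_mul_cexp_cos_le_rpow hω (a := -α) (b := π - α)
    (by linarith) (by linarith) (by linarith) (by linarith)
    (Q := fun x => Q (x + c)) (Q' := fun x => Q' (x + c))
    (fun x hx => ((hQ _ (hmaps hx)).scomp x ((hasDerivAt_id' x).add_const c).hasDerivWithinAt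
      hmaps).congr_deriv (one_smul _ _))
    (hQ'.comp (continuousOn_id.add continuousOn_const) hmaps)
    (fun x hx => hM₀ _ (hmaps hx)) (fun x hx => hM₁ _ (hmaps hx))
  have hlim₁ : -(π / 2) = -α + c := by ring
  have hlim₂ : π / 2 = π - α + c := by ring
  rw [hlim₁, hlim₂, ← integral_comp_add_right]
  convert h using 6 with x
  rw [show α - (x + c) = π / 2 - x by ring, sin_pi_div_two_sub]

lemma hasDerivAt_integral_mul_cexp_sin_sub {P : ℝ → ℂ} {a b ω : ℝ}
    (hP : IntervalIntegrable P volume a b) (α : ℝ) :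
    HasDerivAt (fun α => ∫ φ in a..b, P φ * Complex.exp (Complex.I * ↑(ω * sin (α - φ))))
      (∫ φ in a..b, P φ * (Complex.exp (Complex.I * ↑(ω * sin (α - φ))) *
        (Complex.I * ↑(ω * cos (α - φ))))) α := by
  have hmeas : ∀ g : ℝ → ℂ, Continuous g →
      AEStronglyMeasurable (fun φ => P φ * g φ) (volume.restrict (Ι a b)) := fun g hg =>
    hP.def'.aestronglyMeasurable.mul hg.aestronglyMeasurable
  have hbound : ∀ x φ, ‖P φ * (Complex.exp (Complex.I * ↑(ω * sin (x - φ))) *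
      (Complex.I * ↑(ω * cos (x - φ))))‖ ≤ |ω| * ‖P φ‖ := fun x φ => by
    rw [norm_mul, norm_mul, Complex.norm_exp_I_mul_ofReal, one_mul, norm_mul, Complex.norm_I,
      one_mul, Complex.norm_real, Real.norm_eq_abs, abs_mul, mul_comm]
    exact mul_le_mul_of_nonneg_right (mul_le_of_le_one_right (abs_nonneg _) (abs_cos_le_one _))
      (norm_nonneg _)
  have hderiv : ∀ x φ, HasDerivAt (fun x => P φ * Complex.exp (Complex.I * ↑(ω * sin (x - φ))))
      (P φ * (Complex.exp (Complex.I * ↑(ω * sin (x - φ))) * (Complex.I * ↑(ω * cos (x - φ))))) x :=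
    fun x φ => by
    have hphase : HasDerivAt (fun x => ω * sin (x - φ)) (ω * cos (x - φ)) x := by
      simpa using ((hasDerivAt_sin _).comp x ((hasDerivAt_id' x).sub_const φ)).const_mul ω
    exact ((hphase.ofReal_comp.const_mul Complex.I).cexp).const_mul (P φ)
  exact (hasDerivAt_integral_of_dominated_loc_of_deriv_le (bound := fun φ => |ω| * ‖P φ‖)
    Filter.univ_mem (.of_forall fun x => hmeas _ (by fun_prop))
    (hP.mul_continuousOn (by fun_prop)) (hmeas _ (by fun_prop))
    (.of_forall fun φ _ x _ => hbound x φ)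
    (hP.norm.const_mul _) (.of_forall fun φ _ x _ => hderiv x φ)).2

lemma integral_mul_cexp_sin_sub_eq_integral_deriv_mul {P P' : ℝ → ℂ} {a b ω α : ℝ} (hab : a ≤ b)
    (hP : ∀ x ∈ Icc a b, HasDerivWithinAt P (P' x) (Icc a b) x)
    (hP' : IntervalIntegrable P' volume a b) (ha : P a = 0) (hb : P b = 0) :
    ∫ φ in a..b, P φ * (Complex.exp (Complex.I * ↑(ω * sin (α - φ))) *
      (Complex.I * ↑(ω * cos (α - φ)))) =
      ∫ φ in a..b, P' φ * Complex.exp (Complex.I * ↑(ω * sin (α - φ))) := by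
  have he : ∀ x ∈ [[a, b]], HasDerivWithinAt (fun φ => Complex.exp (Complex.I * ↑(ω * sin (α - φ))))
      (-(Complex.exp (Complex.I * ↑(ω * sin (α - x))) * (Complex.I * ↑(ω * cos (α - x)))))
      [[a, b]] x := fun x _ => by
    have hphase : HasDerivAt (fun φ => ω * sin (α - φ)) (-(ω * cos (α - x))) x := by
      simpa using ((hasDerivAt_sin _).comp x ((hasDerivAt_id' x).const_sub α)).const_mul ω
    refine ((hphase.ofReal_comp.const_mul Complex.I).cexp).hasDerivWithinAt.congr_deriv ?_
    push_cast
    ring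
  rw [← uIcc_of_le hab] at hP
  have h := integral_mul_deriv_eq_deriv_mul_of_hasDerivWithinAt hP he hP'
    (by apply Continuous.intervalIntegrable; fun_prop)
  simp only [ha, hb, zero_mul, sub_zero, zero_sub, mul_neg, intervalIntegral.integral_neg] at h
  exact neg_injective h

lemma exists_norm_integral_mul_cexp_sin_sub_le_rpow {Q : ℝ → ℂ}
    (hQ : ContDiffOn ℝ 1 Q (Icc (-(π / 2)) (π / 2))) :
    ∃ C > 0, ∀ ω α : ℝ, 0 < ω → α ∈ Icc (π / 4) (3 * π / 4) →
      ‖∫ φ in -(π / 2)..π / 2, Q φ * Complex.exp (Complex.I * ↑(ω * sin (α - φ)))‖ ≤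
        C * ω ^ (-(1 / 2) : ℝ) := by
  have hs : UniqueDiffOn ℝ (Icc (-(π / 2)) (π / 2)) := uniqueDiffOn_Icc (by linarith [pi_pos])
  have hQd : ∀ x ∈ Icc (-(π / 2)) (π / 2), HasDerivWithinAt Q
      (derivWithin Q (Icc (-(π / 2)) (π / 2)) x) (Icc (-(π / 2)) (π / 2)) x := fun x hx =>
    (hQ.differentiableOn one_ne_zero x hx).hasDerivWithinAt
  have hQ' := hQ.continuousOn_derivWithin hs le_rfl
  obtain ⟨M₀, hM₀⟩ := isCompact_Icc.exists_bound_of_continuousOn hQ.continuousOn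
  obtain ⟨M₁, hM₁⟩ := isCompact_Icc.exists_bound_of_continuousOn hQ'
  have hM : 0 ≤ 50 * M₀ + 24 * M₁ := by
    have h0 : (0 : ℝ) ∈ Icc (-(π / 2)) (π / 2) := ⟨by linarith [pi_pos], by linarith [pi_pos]⟩
    linarith [(norm_nonneg _).trans (hM₀ 0 h0), (norm_nonneg _).trans (hM₁ 0 h0)]
  refine ⟨50 * M₀ + 24 * M₁ + 1, by positivity, fun ω α hω hα => ?_⟩
  exact (norm_integral_mul_cexp_sin_sub_le_rpow hω hα hQd hQ' hM₀ hM₁).trans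
    (mul_le_mul_of_nonneg_right (by linarith) (by positivity))

/-- tangential-derivative estimate. For `P ∈ C³([−π/2, π/2])` with
`P(±π/2) = 0` and `u(r,α) = ∫_{−π/2}^{π/2} P(φ) e^{i r k sin(α−φ)} dφ`, there is `C > 0`
with `|∂_α u(r,α)| ≤ C r^{−1/2}` for all `r ≥ 1`, uniformly in `α ∈ [π/4, 3π/4]`
(equivalently, the tangential derivative `r⁻¹ ∂_α u` is `O(r^{−3/2})`). -/
theorem stmt9 (k : ℝ) (hk : 0 < k) (P : ℝ → ℂ)
    (hP : ContDiffOn ℝ 3 P (Set.Icc (-(Real.pi / 2)) (Real.pi / 2)))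
    (hP1 : P (-(Real.pi / 2)) = 0) (hP2 : P (Real.pi / 2) = 0)
    (u : ℝ → ℝ → ℂ)
    (hu : ∀ r α : ℝ, u r α =
      ∫ φ in (-(Real.pi / 2))..(Real.pi / 2),
        P φ * Complex.exp (Complex.I * ((r * k * Real.sin (α - φ) : ℝ) : ℂ))) :
    ∃ C > 0, ∀ r α : ℝ, 1 ≤ r → α ∈ Set.Icc (Real.pi / 4) (3 * Real.pi / 4) →
      ‖deriv (fun a : ℝ => u r a) α‖ ≤ C * r ^ (-(1 / 2) : ℝ) := by
  have hπ : -(π / 2) ≤ π / 2 := by linarith [pi_pos]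
  set s := Icc (-(π / 2)) (π / 2)
  have hP' : ContDiffOn ℝ 1 (derivWithin P s) s :=
    hP.derivWithin (uniqueDiffOn_Icc (by linarith [pi_pos])) (by norm_num)
  have hPd : ∀ x ∈ s, HasDerivWithinAt P (derivWithin P s x) s x := fun x hx =>
    (hP.differentiableOn (by norm_num) x hx).hasDerivWithinAt
  obtain ⟨C, hC, hbound⟩ := exists_norm_integral_mul_cexp_sin_sub_le_rpow hP'
  refine ⟨C * k ^ (-(1 / 2) : ℝ), by positivity, fun r α hr hα => ?_⟩
  have hu_deriv : HasDerivAt (fun a => u r a) (∫ φ in -(π / 2)..π / 2,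
      derivWithin P s φ * Complex.exp (Complex.I * ↑(r * k * sin (α - φ)))) α := by
    rw [funext (hu r), ← integral_mul_cexp_sin_sub_eq_integral_deriv_mul hπ hPd
      (hP'.continuousOn.intervalIntegrable_of_Icc hπ) hP1 hP2]
    exact hasDerivAt_integral_mul_cexp_sin_sub (hP.continuousOn.intervalIntegrable_of_Icc hπ) α
  rw [hu_deriv.deriv, mul_assoc, ← mul_rpow hk.le (by linarith), mul_comm k]
  exact hbound (r * k) α (by positivity) hα
end

section
/- Let k > 0, M > 0, and let g : [0, ∞) → ℂ be twice continuously differentiable with |g(s)|, |g′(s)|, |g″(s)| ≤ M·(1 + s)^{−1/2} for all s ≥ 0. For σ ∈ {+1, −1} define J_σ(r, α) = i ∫₀^∞ g(s) · e^{r s cos α} · e^{i σ r sin α √(k² + s²)} ds. Then there exists a constant C > 0, depending only on k and M, such that for all r ≥ 1, all α ∈ [3π/4, π], and both σ ∈ {+1, −1}, |J_σ(r, α) − g(0) e^{i σ k r sin α}/(i r cos α)| ≤ C·r^{−2}. -/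
/-!
With `a = -r cos α ≥ r/2` and `ψ(s) = σ r sin α √(k² + s²)` the integrand is `g w` for the
damped phase `w(s) = e^{-a s + i ψ(s)}`, and `w' = (-a + i ψ') w`. One integration by parts gives
`∫₀^∞ g w = g(0) w(0) / a + (1/a) ∫₀^∞ (g' + i ψ' g) w`.
Since `|g|, |g'| ≤ M` and `|ψ'(s)| ≤ (r/k) s`, the remainder is at most
`(1/a) ∫₀^∞ (M + M (r/k) s) e^{-a s} ds = M/a² + M r/(k a³) = O(r⁻²)`.
-/

open MeasureTheory Set Filter Complex

lemma aestronglyMeasurable_of_hasDerivAt {E : Type*} [NormedAddCommGroup E] [NormedSpace ℝ E]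
    [CompleteSpace E] {f f' : ℝ → E} {s : Set ℝ} {μ : Measure ℝ} (hs : MeasurableSet s)
    (h : ∀ x ∈ s, HasDerivAt f (f' x) x) : AEStronglyMeasurable f' (μ.restrict s) :=
  (aestronglyMeasurable_deriv f _).congr <| (ae_restrict_mem hs).mono fun x hx => (h x hx).deriv

section ExpDecay

variable {a : ℝ}

lemma integrableOn_mul_exp_neg_mul_Ioi (ha : 0 < a) :
    IntegrableOn (fun s : ℝ => s * Real.exp (-a * s)) (Ioi 0) := by
  simpa using integrableOn_rpow_mul_exp_neg_mul_rpow (s := 1) (p := 1) (by norm_num) one_pos ha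

lemma integral_mul_exp_neg_mul_Ioi (ha : 0 < a) :
    ∫ s in Ioi 0, s * Real.exp (-a * s) = 1 / a ^ 2 := by
  have h := Real.integral_rpow_mul_exp_neg_mul_Ioi two_pos ha
  norm_num [Real.Gamma_two] at h
  simpa using h

lemma integrableOn_affine_mul_exp_neg_mul_Ioi (ha : 0 < a) (A B : ℝ) :
    IntegrableOn (fun s : ℝ => (A + B * s) * Real.exp (-a * s)) (Ioi 0) := by
  simp_rw [add_mul, mul_assoc]
  exact ((exp_neg_integrableOn_Ioi 0 ha).const_mul A).add
    ((integrableOn_mul_exp_neg_mul_Ioi ha).const_mul B)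

lemma integral_affine_mul_exp_neg_mul_Ioi (ha : 0 < a) (A B : ℝ) :
    ∫ s in Ioi 0, (A + B * s) * Real.exp (-a * s) = A / a + B / a ^ 2 := by
  simp_rw [add_mul, mul_assoc]
  rw [integral_add ((exp_neg_integrableOn_Ioi 0 ha).const_mul A)
      ((integrableOn_mul_exp_neg_mul_Ioi ha).const_mul B),
    integral_const_mul, integral_const_mul, integral_mul_exp_neg_mul_Ioi ha,
    integral_exp_mul_Ioi (neg_lt_zero.2 ha), mul_zero, Real.exp_zero]
  field_simp

end ExpDecay

noncomputable def dampedPhase (a : ℝ) (ψ : ℝ → ℝ) (s : ℝ) : ℂ :=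
  Real.exp (-a * s) * cexp (I * ψ s)

section DampedPhase

variable {g g' : ℝ → ℂ} {ψ ψ' : ℝ → ℝ} {a M L s : ℝ}

lemma norm_dampedPhase (a : ℝ) (ψ : ℝ → ℝ) (s : ℝ) :
    ‖dampedPhase a ψ s‖ = Real.exp (-a * s) := by
  rw [dampedPhase, norm_mul, norm_exp_I_mul_ofReal, mul_one, norm_real, Real.norm_eq_abs,
    abs_of_pos (Real.exp_pos _)]

lemma dampedPhase_zero (a : ℝ) (ψ : ℝ → ℝ) : dampedPhase a ψ 0 = cexp (I * ψ 0) := by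
  simp [dampedPhase]

lemma hasDerivAt_dampedPhase (hψ : HasDerivAt ψ (ψ' s) s) :
    HasDerivAt (dampedPhase a ψ) ((-a + I * ψ' s) * dampedPhase a ψ s) s := by
  have h := ((((hasDerivAt_id s).const_mul (-a)).ofReal_comp).cexp).mul
    ((hψ.ofReal_comp).const_mul I).cexp
  unfold dampedPhase
  simp only [ofReal_exp]
  refine h.congr_deriv ?_
  simp only [id, mul_one, ofReal_neg, ofReal_mul]
  ring

lemma integral_Ioi_mul_dampedPhase (ha : 0 < a)
    (hg : ∀ s ∈ Ici (0 : ℝ), HasDerivWithinAt g (g' s) (Ici 0) s)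
    (hψ : ∀ s ∈ Ici (0 : ℝ), HasDerivAt ψ (ψ' s) s) (hgM : ∀ s, 0 ≤ s → ‖g s‖ ≤ M)
    (hf : IntegrableOn (fun s => g s * dampedPhase a ψ s) (Ioi 0))
    (hR : IntegrableOn (fun s => (g' s + I * ψ' s * g s) * dampedPhase a ψ s / a)
      (Ioi 0)) :
    ∫ s in Ioi 0, g s * dampedPhase a ψ s = g 0 * cexp (I * ψ 0) / a +
      ∫ s in Ioi 0, (g' s + I * ψ' s * g s) * dampedPhase a ψ s / a := by
  have hw : ContinuousOn (dampedPhase a ψ) (Ici 0) := fun s hs =>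
    (hasDerivAt_dampedPhase (hψ s hs)).continuousAt.continuousWithinAt
  have hF_deriv : ∀ s ∈ Ioi (0 : ℝ), HasDerivAt (fun s => -(g s * dampedPhase a ψ s) / a)
      (g s * dampedPhase a ψ s - (g' s + I * ψ' s * g s) * dampedPhase a ψ s / a) s := by
    intro s hs
    have hgd := (hg s (Ioi_subset_Ici_self hs)).hasDerivAt (Ici_mem_nhds hs)
    refine ((hgd.mul (hasDerivAt_dampedPhase (hψ s (Ioi_subset_Ici_self hs)))).neg.div_const
      _).congr_deriv ?_
    field_simp [ha.ne']
    ring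
  have hF_zero : ContinuousWithinAt (fun s => -(g s * dampedPhase a ψ s) / a) (Ici 0) 0 :=
    ((ContinuousOn.mul (fun s hs => (hg s hs).continuousWithinAt) hw).neg.div_const _) 0
      self_mem_Ici
  have hF_tendsto : Tendsto (fun s => -(g s * dampedPhase a ψ s) / a) atTop (nhds 0) := by
    refine squeeze_zero_norm' (a := fun s => M * Real.exp (-a * s) / a) ?_ ?_
    · filter_upwards [eventually_ge_atTop 0] with s hs
      rw [norm_div, norm_neg, norm_mul, norm_dampedPhase, norm_real, Real.norm_eq_abs,
        abs_of_pos ha]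
      gcongr
      exact hgM s hs
    · simpa using ((Real.tendsto_exp_atBot.comp
        (tendsto_id.const_mul_atTop_of_neg (neg_lt_zero.2 ha))).const_mul M).div_const a
  have hFTC := integral_Ioi_of_hasDerivAt_of_tendsto hF_zero hF_deriv (hf.sub hR) hF_tendsto
  rw [integral_sub hf hR, dampedPhase_zero] at hFTC
  linear_combination hFTC

lemma norm_remainder_le (ha : 0 < a) (hgM : ‖g s‖ ≤ M) (hg'M : ‖g' s‖ ≤ M)
    (hψ'L : |ψ' s| ≤ L * s) :
    ‖(g' s + I * ψ' s * g s) * dampedPhase a ψ s / a‖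
      ≤ (M / a + M * L / a * s) * Real.exp (-a * s) := by
  have hsum : ‖g' s + I * ψ' s * g s‖ ≤ M + L * s * M := by
    calc ‖g' s + I * ψ' s * g s‖ ≤ ‖g' s‖ + |ψ' s| * ‖g s‖ := by
          simpa [norm_real] using norm_add_le (g' s) (I * ψ' s * g s)
      _ ≤ M + L * s * M := by
          gcongr
          · exact (abs_nonneg _).trans hψ'L
  rw [norm_div, norm_mul, norm_dampedPhase, norm_real, Real.norm_eq_abs, abs_of_pos ha]
  calc ‖g' s + I * ψ' s * g s‖ * Real.exp (-a * s) / a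
      ≤ (M + L * s * M) * Real.exp (-a * s) / a := by gcongr
    _ = (M / a + M * L / a * s) * Real.exp (-a * s) := by field_simp

theorem integrableOn_and_norm_integral_mul_dampedPhase_sub_le (ha : 0 < a)
    (hg : ∀ s ∈ Ici (0 : ℝ), HasDerivWithinAt g (g' s) (Ici 0) s)
    (hψ : ∀ s ∈ Ici (0 : ℝ), HasDerivAt ψ (ψ' s) s)
    (hgM : ∀ s, 0 ≤ s → ‖g s‖ ≤ M) (hg'M : ∀ s, 0 ≤ s → ‖g' s‖ ≤ M)
    (hψ'L : ∀ s, 0 ≤ s → |ψ' s| ≤ L * s) :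
    IntegrableOn (fun s => g s * dampedPhase a ψ s) (Ioi 0) ∧
      ‖(∫ s in Ioi 0, g s * dampedPhase a ψ s) - g 0 * cexp (I * ψ 0) / a‖
        ≤ M / a ^ 2 + M * L / a ^ 3 := by
  have hgc : ContinuousOn g (Ici 0) := fun s hs => (hg s hs).continuousWithinAt
  have hwc : ContinuousOn (dampedPhase a ψ) (Ici 0) := fun s hs =>
    (hasDerivAt_dampedPhase (hψ s hs)).continuousAt.continuousWithinAt
  have hR_meas : AEStronglyMeasurable
      (fun s => (g' s + I * ψ' s * g s) * dampedPhase a ψ s / a) (volume.restrict (Ioi 0)) := by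
    have hg' : AEStronglyMeasurable g' (volume.restrict (Ioi 0)) :=
      aestronglyMeasurable_of_hasDerivAt measurableSet_Ioi fun s hs =>
      (hg s (Ioi_subset_Ici_self hs)).hasDerivAt (Ici_mem_nhds hs)
    have hψ' : AEStronglyMeasurable (fun s => (ψ' s : ℂ)) (volume.restrict (Ioi 0)) :=
      continuous_ofReal.comp_aestronglyMeasurable <|
        aestronglyMeasurable_of_hasDerivAt measurableSet_Ioi fun s hs =>
          hψ s (Ioi_subset_Ici_self hs)
    exact ((hg'.add ((aestronglyMeasurable_const.mul hψ').mul
      ((hgc.mono Ioi_subset_Ici_self).aestronglyMeasurable measurableSet_Ioi))).mul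
      ((hwc.mono Ioi_subset_Ici_self).aestronglyMeasurable measurableSet_Ioi)).mul_const _
  have hR_le := fun s (hs : s ∈ Ioi (0 : ℝ)) =>
    norm_remainder_le (ψ := ψ) ha (hgM s hs.out.le) (hg'M s hs.out.le) (hψ'L s hs.out.le)
  have hf : IntegrableOn (fun s => g s * dampedPhase a ψ s) (Ioi 0) := by
    refine ((exp_neg_integrableOn_Ioi 0 ha).const_mul M).mono'
      (((hgc.mul hwc).mono Ioi_subset_Ici_self).aestronglyMeasurable measurableSet_Ioi) ?_
    filter_upwards [ae_restrict_mem measurableSet_Ioi] with s hs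
    rw [norm_mul, norm_dampedPhase]
    exact mul_le_mul_of_nonneg_right (hgM s hs.out.le) (Real.exp_pos _).le
  have hR : IntegrableOn (fun s => (g' s + I * ψ' s * g s) * dampedPhase a ψ s / a) (Ioi 0) :=
    (integrableOn_affine_mul_exp_neg_mul_Ioi ha _ _).mono' hR_meas <|
      (ae_restrict_mem measurableSet_Ioi).mono hR_le
  refine ⟨hf, ?_⟩
  rw [integral_Ioi_mul_dampedPhase ha hg hψ hgM hf hR, add_sub_cancel_left]
  calc _ ≤ ∫ s in Ioi 0, (M / a + M * L / a * s) * Real.exp (-a * s) :=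
        norm_integral_le_of_norm_le (integrableOn_affine_mul_exp_neg_mul_Ioi ha _ _) <|
          (ae_restrict_mem measurableSet_Ioi).mono hR_le
    _ = M / a ^ 2 + M * L / a ^ 3 := by
        rw [integral_affine_mul_exp_neg_mul_Ioi ha]
        field_simp

end DampedPhase

lemma hasDerivAt_sqrt_sq_add_sq {k : ℝ} (hk : 0 < k) (s : ℝ) :
    HasDerivAt (fun s => √(k ^ 2 + s ^ 2)) (s / √(k ^ 2 + s ^ 2)) s := by
  refine (((hasDerivAt_pow 2 s).const_add (k ^ 2)).sqrt (by positivity)).congr_deriv ?_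
  field_simp
  ring

lemma abs_mul_div_sqrt_sq_add_sq_le {k s : ℝ} (hk : 0 < k) (hs : 0 ≤ s) (β : ℝ) :
    |β * (s / √(k ^ 2 + s ^ 2))| ≤ |β| / k * s := by
  rw [abs_mul, abs_div, abs_of_nonneg hs, abs_of_pos (by positivity : 0 < √(k ^ 2 + s ^ 2)),
    div_mul_eq_mul_div, mul_div_assoc]
  gcongr
  exact Real.le_sqrt_of_sq_le (by nlinarith)

lemma cos_le_neg_half_of_mem_Icc {α : ℝ} (hα : α ∈ Icc (3 * Real.pi / 4) Real.pi) :
    Real.cos α ≤ -1 / 2 := by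
  have h := Real.cos_le_cos_of_nonneg_of_le_pi (x := Real.pi - Real.pi / 3)
    (by linarith [Real.pi_pos]) hα.2 (by linarith [hα.1, Real.pi_pos])
  rwa [Real.cos_pi_sub, Real.cos_pi_div_three, show -(1 / 2 : ℝ) = -1 / 2 by ring] at h

lemma abs_mul_mul_sin_le {σ r : ℝ} (hσ : σ = 1 ∨ σ = -1) (hr : 0 ≤ r) (α : ℝ) :
    |σ * r * Real.sin α| ≤ r := by
  have hσ' : |σ| = 1 := by rcases hσ with rfl | rfl <;> norm_num
  rw [abs_mul, abs_mul, hσ', one_mul, abs_of_nonneg hr]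
  exact mul_le_of_le_one_right hr (Real.abs_sin_le_one α)

lemma mul_one_add_rpow_neg_half_le {M s : ℝ} (hM : 0 ≤ M) (hs : 0 ≤ s) :
    M * (1 + s) ^ (-(1 / 2) : ℝ) ≤ M :=
  mul_le_of_le_one_right hM (Real.rpow_le_one_of_one_le_of_nonpos (by linarith) (by norm_num))

lemma I_mul_sub_div_I_mul_neg (X Y : ℂ) (a : ℝ) :
    I * X - Y / (I * ((-a : ℝ) : ℂ)) = I * (X - Y / a) := by
  rw [ofReal_neg, mul_neg, div_neg, mul_comm I, ← div_div, div_I]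
  ring

theorem stmt10_general (k M : ℝ) (hk : 0 < k) (hM : 0 < M)
    (g g' : ℝ → ℂ)
    (hg' : ∀ s ∈ Set.Ici (0 : ℝ), HasDerivWithinAt g (g' s) (Set.Ici 0) s)
    (hb0 : ∀ s : ℝ, 0 ≤ s → ‖g s‖ ≤ M * (1 + s) ^ (-(1 / 2) : ℝ))
    (hb1 : ∀ s : ℝ, 0 ≤ s → ‖g' s‖ ≤ M * (1 + s) ^ (-(1 / 2) : ℝ)) :
    ∃ C > 0, ∀ r α σ : ℝ, 1 ≤ r → α ∈ Set.Icc (3 * Real.pi / 4) Real.pi →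
      (σ = 1 ∨ σ = -1) →
      MeasureTheory.IntegrableOn
        (fun s : ℝ => g s * ((Real.exp (r * s * Real.cos α) : ℝ) : ℂ) *
          Complex.exp (Complex.I * ((σ * r * Real.sin α * Real.sqrt (k ^ 2 + s ^ 2) : ℝ) : ℂ)))
        (Set.Ici 0) ∧
      ‖Complex.I * (∫ s in Set.Ici (0 : ℝ),
            g s * ((Real.exp (r * s * Real.cos α) : ℝ) : ℂ) *
              Complex.exp
                (Complex.I * ((σ * r * Real.sin α * Real.sqrt (k ^ 2 + s ^ 2) : ℝ) : ℂ)))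
          - g 0 * Complex.exp (Complex.I * ((σ * k * r * Real.sin α : ℝ) : ℂ)) /
              (Complex.I * ((r * Real.cos α : ℝ) : ℂ))‖ ≤ C * (r ^ 2)⁻¹ := by
  refine ⟨4 * M + 8 * M / k, by positivity, fun r α σ hr hα hσ => ?_⟩
  set a := -(r * Real.cos α) with ha_def
  set β := σ * r * Real.sin α
  have ha : r / 2 ≤ a := by nlinarith [cos_le_neg_half_of_mem_Icc hα]
  have hβ : |β| ≤ r := abs_mul_mul_sin_le hσ (by linarith) α
  obtain ⟨hint, hnorm⟩ := integrableOn_and_norm_integral_mul_dampedPhase_sub_le (a := a)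
    (ψ := fun s => β * √(k ^ 2 + s ^ 2)) (by linarith) hg'
    (fun s _ => (hasDerivAt_sqrt_sq_add_sq hk s).const_mul β)
    (fun s hs => (hb0 s hs).trans (mul_one_add_rpow_neg_half_le hM.le hs))
    (fun s hs => (hb1 s hs).trans (mul_one_add_rpow_neg_half_le hM.le hs))
    (fun s hs => abs_mul_div_sqrt_sq_add_sq_le hk hs β)
  have hintegrand : ∀ s, g s * (Real.exp (r * s * Real.cos α) : ℂ) *
      cexp (I * ((β * √(k ^ 2 + s ^ 2) : ℝ) : ℂ))
        = g s * dampedPhase a (fun s => β * √(k ^ 2 + s ^ 2)) s := fun s => by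
    rw [dampedPhase, show r * s * Real.cos α = -a * s by rw [ha_def]; ring, mul_assoc]
  have hphase0 : β * √(k ^ 2 + 0 ^ 2) = σ * k * r * Real.sin α := by
    rw [zero_pow two_ne_zero, add_zero, Real.sqrt_sq hk.le]; ring
  simp_rw [hintegrand]
  rw [integrableOn_Ici_iff_integrableOn_Ioi, integral_Ici_eq_integral_Ioi,
    show r * Real.cos α = -a by rw [ha_def]; ring, I_mul_sub_div_I_mul_neg, norm_mul, norm_I,
    one_mul, ← hphase0]
  refine ⟨hint, hnorm.trans ?_⟩
  calc M / a ^ 2 + M * (|β| / k) / a ^ 3 ≤ M / (r / 2) ^ 2 + M * (r / k) / (r / 2) ^ 3 := by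
        gcongr
    _ = (4 * M + 8 * M / k) * (r ^ 2)⁻¹ := by field_simp; ring

/-- branch-ray estimate. Let `g : [0,∞) → ℂ` be twice continuously
differentiable (derivatives `g'`, `g''` within `[0,∞)`) with
`|g|, |g′|, |g″| ≤ M(1+s)^{−1/2}`. For `σ = ±1` let
`J_σ(r,α) = i∫₀^∞ g(s) e^{r s cos α} e^{iσ r sin α √(k²+s²)} ds`. Then there is `C > 0`
(depending only on `k`, `M`) with
`|J_σ(r,α) − g(0) e^{iσkr sin α}/(i r cos α)| ≤ C r^{−2}` for all `r ≥ 1`,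
`α ∈ [3π/4, π]`, and both signs `σ`; moreover the integral converges absolutely. -/
theorem stmt10 (k M : ℝ) (hk : 0 < k) (hM : 0 < M)
    (g g' g'' : ℝ → ℂ)
    (hg' : ∀ s ∈ Set.Ici (0 : ℝ), HasDerivWithinAt g (g' s) (Set.Ici 0) s)
    (hg'' : ∀ s ∈ Set.Ici (0 : ℝ), HasDerivWithinAt g' (g'' s) (Set.Ici 0) s)
    (hcont : ContinuousOn g'' (Set.Ici 0))
    (hb0 : ∀ s : ℝ, 0 ≤ s → ‖g s‖ ≤ M * (1 + s) ^ (-(1 / 2) : ℝ))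
    (hb1 : ∀ s : ℝ, 0 ≤ s → ‖g' s‖ ≤ M * (1 + s) ^ (-(1 / 2) : ℝ))
    (hb2 : ∀ s : ℝ, 0 ≤ s → ‖g'' s‖ ≤ M * (1 + s) ^ (-(1 / 2) : ℝ)) :
    ∃ C > 0, ∀ r α σ : ℝ, 1 ≤ r → α ∈ Set.Icc (3 * Real.pi / 4) Real.pi →
      (σ = 1 ∨ σ = -1) →
      MeasureTheory.IntegrableOn
        (fun s : ℝ => g s * ((Real.exp (r * s * Real.cos α) : ℝ) : ℂ) *
          Complex.exp (Complex.I * ((σ * r * Real.sin α * Real.sqrt (k ^ 2 + s ^ 2) : ℝ) : ℂ)))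
        (Set.Ici 0) ∧
      ‖Complex.I * (∫ s in Set.Ici (0 : ℝ),
            g s * ((Real.exp (r * s * Real.cos α) : ℝ) : ℂ) *
              Complex.exp
                (Complex.I * ((σ * r * Real.sin α * Real.sqrt (k ^ 2 + s ^ 2) : ℝ) : ℂ)))
          - g 0 * Complex.exp (Complex.I * ((σ * k * r * Real.sin α : ℝ) : ℂ)) /
              (Complex.I * ((r * Real.cos α : ℝ) : ℂ))‖ ≤ C * (r ^ 2)⁻¹ :=
  stmt10_general k M hk hM g g' hg' hb0 hb1
end

section
/- Let k > 0 and M > 0. There exists a constant C > 0, depending only on k and M, such that for every measurable p : [k, ∞) → ℂ with |p(ξ)| ≤ M for all ξ ≥ k, every r ≥ 1, and every α ∈ [π/4, 3π/4], the integral ∫_k^∞ p(ξ) e^{−i r ξ cos α} e^{−r sin α √(ξ² − k²)} dξ converges absolutely and satisfies |∫_k^∞ p(ξ) e^{−i r ξ cos α} e^{−r sin α √(ξ² − k²)} dξ| ≤ C·r^{−2}. -/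
/-!
Since `sin α ≥ √2 / 2` on `[π/4, 3π/4]` and `ξ² - k² = (ξ + k)(ξ - k) ≥ 2k (ξ - k)` for `ξ ≥ k`,
the modulus of the integrand is at most `M e^{-r √k √(ξ - k)}`. After the shift `u = ξ - k`
this majorant integrates to `M ∫_0^∞ e^{-b √u} du = 2M / b²` with `b = r √k`, a Gamma integral,
which gives the bound `(2M / k) r⁻²`.
-/

open MeasureTheory Set Real

theorem sqrt_two_div_two_le_sin_of_mem_Icc {α : ℝ} (hα : α ∈ Icc (π / 4) (3 * π / 4)) :
    √2 / 2 ≤ sin α := by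
  rw [← sin_pi_div_four]
  rcases le_total α (π / 2) with h | h
  · exact strictMonoOn_sin.monotoneOn ⟨by linarith [pi_pos], by linarith [pi_pos]⟩
      ⟨by linarith [pi_pos, hα.1], h⟩ hα.1
  · rw [← sin_pi_sub α]
    exact strictMonoOn_sin.monotoneOn ⟨by linarith [pi_pos], by linarith [pi_pos]⟩
      ⟨by linarith [hα.2], by linarith [pi_pos]⟩ (by linarith [hα.2])

theorem sqrt_mul_sqrt_sub_le_mul_sqrt_sq_sub_sq {k ξ s : ℝ} (hk : 0 ≤ k) (hξ : k ≤ ξ)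
    (hs : √2 / 2 ≤ s) : √k * √(ξ - k) ≤ s * √(ξ ^ 2 - k ^ 2) := by
  have h2 : √2 * √2 = 2 := mul_self_sqrt zero_le_two
  calc √k * √(ξ - k) = √2 / 2 * √(2 * k * (ξ - k)) := by
        rw [sqrt_mul (by positivity), sqrt_mul zero_le_two]
        linear_combination (-(1 / 2) * √k * √(ξ - k)) * h2
    _ ≤ √2 / 2 * √(ξ ^ 2 - k ^ 2) := by gcongr; nlinarith
    _ ≤ s * √(ξ ^ 2 - k ^ 2) := by gcongr

theorem integral_Ioi_exp_neg_mul_sqrt {b : ℝ} (hb : 0 < b) :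
    ∫ u in Ioi (0 : ℝ), exp (-(b * √u)) = 2 / b ^ 2 := by
  have hΓ : Gamma 3 = 2 := by
    rw [show (3 : ℝ) = (2 : ℕ) + 1 by norm_num, Gamma_nat_eq_factorial]; norm_num
  rw [setIntegral_congr_fun measurableSet_Ioi fun u _ => by rw [sqrt_eq_rpow, ← neg_mul],
    integral_exp_neg_mul_rpow one_half_pos hb]
  norm_num [hΓ, rpow_neg hb.le, div_eq_mul_inv, mul_comm]

theorem integral_Ici_exp_neg_mul_sqrt_sub {b : ℝ} (hb : 0 < b) (k : ℝ) :
    ∫ ξ in Ici k, exp (-(b * √(ξ - k))) = 2 / b ^ 2 := by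
  have := (measurePreserving_add_right volume k).setIntegral_preimage_emb
    (MeasurableEquiv.addRight k).measurableEmbedding (fun ξ => exp (-(b * √(ξ - k)))) (Ioi k)
  rw [integral_Ici_eq_integral_Ioi, ← this, preimage_add_const_Ioi, sub_self]
  simpa using integral_Ioi_exp_neg_mul_sqrt hb

theorem norm_mul_exp_neg_I_mul_mul_ofReal_exp (z : ℂ) (x y : ℝ) :
    ‖z * Complex.exp (-(Complex.I * x)) * (exp y : ℂ)‖ = ‖z‖ * exp y := by
  simp [Complex.norm_exp]

theorem integrableOn_Ici_and_norm_integral_le_of_norm_le_exp_sqrt {E : Type*}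
    [NormedAddCommGroup E] [NormedSpace ℝ E] {f : ℝ → E} {k b M : ℝ} (hb : 0 < b)
    (hf : AEStronglyMeasurable f (volume.restrict (Ici k)))
    (hfM : ∀ ξ ∈ Ici k, ‖f ξ‖ ≤ M * exp (-(b * √(ξ - k)))) :
    IntegrableOn f (Ici k) ∧ ‖∫ ξ in Ici k, f ξ‖ ≤ 2 * M / b ^ 2 := by
  have hg : IntegrableOn (fun ξ => M * exp (-(b * √(ξ - k)))) (Ici k) :=
    (Integrable.of_integral_ne_zero (by
      rw [integral_Ici_exp_neg_mul_sqrt_sub hb]; positivity)).const_mul M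
  have hfM' : ∀ᵐ ξ ∂volume.restrict (Ici k), ‖f ξ‖ ≤ M * exp (-(b * √(ξ - k))) :=
    ae_restrict_of_forall_mem measurableSet_Ici hfM
  refine ⟨hg.mono' hf hfM', (norm_integral_le_of_norm_le hg hfM').trans_eq ?_⟩
  rw [integral_const_mul, integral_Ici_exp_neg_mul_sqrt_sub hb, mul_div_assoc']
  ring

/-- evanescent-spectrum tail estimate. For `k, M > 0` there is `C > 0`
(depending only on `k` and `M`) such that for every measurable `p : [k,∞) → ℂ` with
`|p| ≤ M`, every `r ≥ 1`, and every `α ∈ [π/4, 3π/4]`, the integral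
`∫_k^∞ p(ξ) e^{−i r ξ cos α} e^{−r sin α √(ξ²−k²)} dξ` converges absolutely and is bounded
by `C r^{−2}`. -/
theorem stmt11 (k M : ℝ) (hk : 0 < k) (hM : 0 < M) :
    ∃ C > 0, ∀ p : ℝ → ℂ, Measurable p → (∀ ξ : ℝ, k ≤ ξ → ‖p ξ‖ ≤ M) →
      ∀ r α : ℝ, 1 ≤ r → α ∈ Set.Icc (Real.pi / 4) (3 * Real.pi / 4) →
        MeasureTheory.IntegrableOn
          (fun ξ : ℝ => p ξ * Complex.exp (-(Complex.I * ((r * ξ * Real.cos α : ℝ) : ℂ))) *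
            ((Real.exp (-(r * Real.sin α * Real.sqrt (ξ ^ 2 - k ^ 2))) : ℝ) : ℂ))
          (Set.Ici k) ∧
        ‖∫ ξ in Set.Ici k,
            p ξ * Complex.exp (-(Complex.I * ((r * ξ * Real.cos α : ℝ) : ℂ))) *
              ((Real.exp (-(r * Real.sin α * Real.sqrt (ξ ^ 2 - k ^ 2))) : ℝ) : ℂ)‖ ≤
          C * (r ^ 2)⁻¹ := by
  refine ⟨2 * M / k, by positivity, fun p hp hpM r α hr hα => ?_⟩
  have hb : 0 < r * √k := by positivity
  rw [show 2 * M / k * (r ^ 2)⁻¹ = 2 * M / (r * √k) ^ 2 by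
    rw [mul_pow, sq_sqrt hk.le]; field_simp]
  refine integrableOn_Ici_and_norm_integral_le_of_norm_le_exp_sqrt (M := M) hb (by fun_prop)
    fun ξ (hξ : k ≤ ξ) => ?_
  rw [norm_mul_exp_neg_I_mul_mul_ofReal_exp]
  gcongr ?_ * exp (-?_)
  · exact hpM ξ hξ
  · rw [mul_assoc, mul_assoc]
    gcongr r * ?_
    exact sqrt_mul_sqrt_sub_le_mul_sqrt_sq_sub_sq hk.le hξ (sqrt_two_div_two_le_sin_of_mem_Icc hα)
end
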